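/- arXiv:2605.11320 — 5 statements merged into one kernel-verified Lean document; each statement's English description precedes it below -/
import Mathlib

section
/- For t ≥ 1 and k ≥ 3, let GA(t,k)' be the graph obtained from GA(t,k) by deleting the edges {i, i+1} for all i ∈ Z_n (the exterior Hamiltonian cycle), where n = t(k-1)+2. Then for k ≥ 4, GA(t,k)' is a connected (k-2)-regular graph. -/
/-- `GA(t,k)'`: the Generalized Andrásfai graph `GA(t,k)` on `ℤ/(t(k-1)+2)ℤ` with the
edges of the exterior Hamiltonian cycle removed: vertices `i < j` are adjacent iff
`j - i ≡ 1 (mod t)` and `j - i ∉ {1, n-1}` where `n = t(k-1)+2`. -/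
def GA' (t k : ℕ) : SimpleGraph (ZMod (t * (k - 1) + 2)) :=
  SimpleGraph.fromRel fun x y =>
    (y - x).val % t = 1 % t ∧ (y - x).val ≠ 1 ∧ (y - x).val ≠ t * (k - 1) + 1

lemma GA'_adj_aux (t k : ℕ) (ht : 1 ≤ t) (hk : 4 ≤ k) (x : ZMod (t * (k - 1) + 2))
    (j : ℕ) (hj1 : 1 ≤ j) (hj2 : j ≤ k - 2) :
    (GA' t k).Adj x (x + ((1 + j * t : ℕ) : ZMod (t * (k - 1) + 2))) := by
  have hsplit : t * (k - 1) = t * (k - 2) + t := by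
    have h : k - 1 = (k - 2) + 1 := by omega
    rw [h, Nat.mul_add, Nat.mul_one]
  have hjt : j * t ≤ (k - 2) * t := Nat.mul_le_mul_right _ hj2
  have hct : (k - 2) * t = t * (k - 2) := Nat.mul_comm _ _
  have hjt1 : 1 ≤ j * t := Nat.one_le_iff_ne_zero.2 (Nat.mul_ne_zero (by omega) (by omega))
  have hlt : 1 + j * t < t * (k - 1) + 2 := by omega
  have hval : ((1 + j * t : ℕ) : ZMod (t * (k - 1) + 2)).val = 1 + j * t :=
    ZMod.val_natCast_of_lt hlt
  have hsub : x + ((1 + j * t : ℕ) : ZMod (t * (k - 1) + 2)) - x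
      = ((1 + j * t : ℕ) : ZMod (t * (k - 1) + 2)) := by ring
  rw [GA', SimpleGraph.fromRel_adj]
  refine ⟨?_, Or.inl ?_⟩
  · intro h
    have h0 : ((1 + j * t : ℕ) : ZMod (t * (k - 1) + 2)) = 0 :=
      add_left_cancel (a := x) (by simpa using h.symm)
    have h1 := congrArg ZMod.val h0
    rw [hval, ZMod.val_zero] at h1
    omega
  · rw [hsub, hval]
    refine ⟨Nat.add_mul_mod_self_right 1 j t, by omega, by omega⟩

lemma GA'_nat_char (t k d : ℕ) (ht : 1 ≤ t) (hk : 4 ≤ k) (hd : 0 < d)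
    (hdn : d < t * (k - 1) + 2) (h1 : d % t = 1 % t) (h2 : d ≠ 1)
    (h3 : d ≠ t * (k - 1) + 1) : ∃ j, 1 ≤ j ∧ j ≤ k - 2 ∧ d = 1 + j * t := by
  obtain ⟨m, rfl⟩ : ∃ m, d = m + 1 := ⟨d - 1, by omega⟩
  have hmod : (m + 1) % t = 1 % t := h1
  have hdvd : t ∣ m := by
    have : m % t = 0 % t := Nat.ModEq.add_right_cancel' 1 hmod
    simpa [Nat.mod_eq_of_lt] using (Nat.modEq_zero_iff_dvd).1 this
  obtain ⟨j, rfl⟩ := hdvd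
  have hcomm : t * j = j * t := Nat.mul_comm _ _
  have hj1 : 1 ≤ j := by
    rcases Nat.eq_zero_or_pos j with h | h
    · subst h; simp at h2
    · exact h
  have hjk : j ≤ k - 1 := by
    by_contra hcon
    have : k - 1 + 1 ≤ j := by omega
    have := Nat.mul_le_mul_left t this
    rw [Nat.mul_add, Nat.mul_one] at this
    omega
  have hjne : j ≠ k - 1 := by
    intro h; subst h; omega
  exact ⟨j, hj1, by omega, by omega⟩

lemma GA'_nbhd (t k : ℕ) (ht : 1 ≤ t) (hk : 4 ≤ k) (v : ZMod (t * (k - 1) + 2)) :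
    (GA' t k).neighborSet v =
      (fun j : ℕ => v + ((1 + j * t : ℕ) : ZMod (t * (k - 1) + 2))) '' Set.Icc 1 (k - 2) := by
  ext w
  simp only [SimpleGraph.mem_neighborSet, Set.mem_image, Set.mem_Icc]
  constructor
  · intro h
    rw [GA', SimpleGraph.fromRel_adj] at h
    obtain ⟨hne, h⟩ := h
    have hwv : w - v ≠ 0 := sub_ne_zero_of_ne (Ne.symm hne)
    have hd0 : (w - v).val ≠ 0 := fun hc => hwv ((ZMod.val_eq_zero _).1 hc)
    have hdn : (w - v).val < t * (k - 1) + 2 := ZMod.val_lt _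
    have hw : w = v + (((w - v).val : ℕ) : ZMod (t * (k - 1) + 2)) := by
      rw [ZMod.natCast_zmod_val]; ring
    rcases h with h | h
    · obtain ⟨j, hj1, hj2, hd⟩ := GA'_nat_char t k _ ht hk (by omega) hdn h.1 h.2.1 h.2.2
      exact ⟨j, ⟨hj1, hj2⟩, by rw [← hd, ← hw]⟩
    · have hvw : v - w = -(w - v) := by ring
      have he : (v - w).val = t * (k - 1) + 2 - (w - v).val := by
        rw [hvw, ZMod.neg_val, if_neg hwv]
      rw [he] at h
      obtain ⟨j', hj1', hj2', hd'⟩ := GA'_nat_char t k _ ht hk (by omega) (by omega) h.1 h.2.1 h.2.2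
      have hsplit : t * (k - 1) = t * (k - 1 - j') + t * j' := by
        rw [← Nat.mul_add]
        congr 1
        omega
      have hc1 : j' * t = t * j' := Nat.mul_comm _ _
      have hc2 : (k - 1 - j') * t = t * (k - 1 - j') := Nat.mul_comm _ _
      refine ⟨k - 1 - j', ⟨by omega, by omega⟩, ?_⟩
      rw [hw]
      congr 1
      congr 1
      omega
  · rintro ⟨j, ⟨hj1, hj2⟩, rfl⟩
    exact GA'_adj_aux t k ht hk v j hj1 hj2

/-- For `k ≥ 4`, `GA(t,k)'` is a connected `(k-2)`-regular graph. -/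
theorem stmt_6 (t k : ℕ) (ht : 1 ≤ t) (hk : 4 ≤ k) :
    (GA' t k).Connected ∧
    ∀ v : ZMod (t * (k - 1) + 2), ((GA' t k).neighborSet v).ncard = k - 2 := by
  have hadj1 : ∀ x : ZMod (t * (k - 1) + 2),
      (GA' t k).Adj x (x + ((1 + 1 * t : ℕ) : ZMod (t * (k - 1) + 2))) :=
    fun x => GA'_adj_aux t k ht hk x 1 le_rfl (by omega)
  have hadj2 : ∀ x : ZMod (t * (k - 1) + 2),
      (GA' t k).Adj x (x + ((1 + 2 * t : ℕ) : ZMod (t * (k - 1) + 2))) :=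
    fun x => GA'_adj_aux t k ht hk x 2 (by omega) (by omega)
  have reach_t : ∀ x : ZMod (t * (k - 1) + 2),
      (GA' t k).Reachable x (x + (t : ZMod (t * (k - 1) + 2))) := by
    intro x
    have h1 := (hadj2 x).reachable
    have h2 := (hadj1 (x + (t : ZMod (t * (k - 1) + 2)))).reachable
    have heq : x + (t : ZMod (t * (k - 1) + 2)) + ((1 + 1 * t : ℕ) : ZMod (t * (k - 1) + 2))
        = x + ((1 + 2 * t : ℕ) : ZMod (t * (k - 1) + 2)) := by
      push_cast
      ring
    rw [heq] at h2
    exact h1.trans h2.symm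
  have reach_1 : ∀ x : ZMod (t * (k - 1) + 2), (GA' t k).Reachable x (x + 1) := by
    intro x
    have h1 := (hadj1 x).reachable
    have h2 := reach_t (x + 1)
    have heq : x + 1 + (t : ZMod (t * (k - 1) + 2))
        = x + ((1 + 1 * t : ℕ) : ZMod (t * (k - 1) + 2)) := by
      push_cast
      ring
    rw [heq] at h2
    exact h1.trans h2.symm
  have reach_all : ∀ m : ℕ, (GA' t k).Reachable 0 ((m : ℕ) : ZMod (t * (k - 1) + 2)) := by
    intro m
    induction m with
    | zero => simp [SimpleGraph.Reachable.refl]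
    | succ m ih =>
      have heq : ((m + 1 : ℕ) : ZMod (t * (k - 1) + 2))
          = ((m : ℕ) : ZMod (t * (k - 1) + 2)) + 1 := by push_cast; ring
      rw [heq]
      exact ih.trans (reach_1 _)
  constructor
  · refine ⟨fun u w => ?_⟩
    have hu := reach_all u.val
    have hw := reach_all w.val
    rw [ZMod.natCast_zmod_val] at hu hw
    exact hu.symm.trans hw
  · intro v
    rw [GA'_nbhd t k ht hk v]
    rw [Set.ncard_image_of_injOn]
    · rw [← Finset.coe_Icc, Set.ncard_coe_finset, Nat.card_Icc]
      omega
    · intro j1 hj1 j2 hj2 hje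
      simp only [Set.mem_Icc] at hj1 hj2
      have hc := add_left_cancel hje
      have hlt : ∀ j, j ≤ k - 2 → 1 + j * t < t * (k - 1) + 2 := by
        intro j hj
        have hsplit : t * (k - 1) = t * (k - 2) + t := by
          have h : k - 1 = (k - 2) + 1 := by omega
          rw [h, Nat.mul_add, Nat.mul_one]
        have hjt : j * t ≤ (k - 2) * t := Nat.mul_le_mul_right _ hj
        have hct : (k - 2) * t = t * (k - 2) := Nat.mul_comm _ _
        omega
      have hv := congrArg ZMod.val hc
      rw [ZMod.val_natCast_of_lt (hlt j1 hj1.2), ZMod.val_natCast_of_lt (hlt j2 hj2.2)] at hv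
      have : j1 * t = j2 * t := by omega
      exact Nat.eq_of_mul_eq_mul_right (by omega) this
end

section
/- For t ≥ 1, the graph GA(t,3)' consists of t+1 disjoint edges, i.e. its edge set is a disjoint union of t+1 copies of K_2. -/
lemma aux (t d : ℕ) (ht : 1 ≤ t) (hlt : d < 2*t+2) (h0 : d ≠ 0)
    (hm : d % t = 1 % t) (h1 : d ≠ 1) (h2 : d ≠ 2*t+1) : d = t+1 := by
  rcases eq_or_lt_of_le ht with h | h
  · omega
  · have h1t : 1 % t = 1 := Nat.mod_eq_of_lt h
    rw [h1t] at hm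
    have hdm := Nat.div_add_mod d t
    set q := d / t with hq
    rw [hm] at hdm
    have hq2 : q ≤ 2 := by
      by_contra hc
      have : t * 3 ≤ t * q := Nat.mul_le_mul_left t (by omega)
      omega
    interval_cases q <;> omega

lemma aux2 (t : ℕ) (ht : 1 ≤ t) : (t+1) % t = 1 % t := by
  conv_lhs => rw [Nat.add_mod, Nat.mod_self]
  simp

lemma adj_iff (t : ℕ) (ht : 1 ≤ t) (x y : ZMod (t * (3-1) + 2)) :
    (GA' t 3).Adj x y ↔ y - x = ((t+1 : ℕ) : ZMod (t * (3-1) + 2)) := by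
  haveI : NeZero (t * (3-1) + 2) := ⟨by omega⟩
  have hn : t * (3-1) + 2 = 2*t+2 := by omega
  have hvc : (((t+1 : ℕ)) : ZMod (t * (3-1) + 2)).val = t+1 :=
    ZMod.val_cast_of_lt (by omega)
  rw [GA', SimpleGraph.fromRel_adj]
  constructor
  · rintro ⟨hne, h | h⟩
    · obtain ⟨hm, h1, h2⟩ := h
      have h0 : (y - x).val ≠ 0 := by
        rw [Ne, ZMod.val_eq_zero, sub_eq_zero]
        exact fun hc => hne hc.symm
      have hlt : (y - x).val < 2*t+2 := hn ▸ ZMod.val_lt _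
      have := aux t (y - x).val ht hlt h0 hm h1 (by omega)
      apply ZMod.val_injective
      rw [hvc, this]
    · obtain ⟨hm, h1, h2⟩ := h
      have h0 : (x - y).val ≠ 0 := by
        rw [Ne, ZMod.val_eq_zero, sub_eq_zero]
        exact fun hc => hne hc
      have hlt : (x - y).val < 2*t+2 := hn ▸ ZMod.val_lt _
      have he : (x - y).val = t+1 := aux t (x - y).val ht hlt h0 hm h1 (by omega)
      have hxy0 : x - y ≠ 0 := by
        rw [Ne, sub_eq_zero]; exact fun hc => hne hc
      have : (y - x).val = t+1 := by
        have : y - x = -(x - y) := by ring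
        rw [this, ZMod.neg_val, if_neg hxy0, he, hn]
        omega
      apply ZMod.val_injective
      rw [hvc, this]
  · intro h
    have hval : (y - x).val = t+1 := by rw [h, hvc]
    refine ⟨?_, Or.inl ⟨?_, ?_, ?_⟩⟩
    · intro hc
      rw [hc, sub_self, ZMod.val_zero] at hval
      omega
    · rw [hval]; exact aux2 t ht
    · omega
    · omega

/-- `GA(t,3)'` is a disjoint union of `t+1` copies of `K₂`: it is a `1`-regular
graph (a perfect matching) with exactly `t+1` edges. -/
theorem stmt_7 (t : ℕ) (ht : 1 ≤ t) :
    (∀ v : ZMod (t * (3 - 1) + 2), ((GA' t 3).neighborSet v).ncard = 1) ∧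
    (GA' t 3).edgeSet.ncard = t + 1 := by
  haveI : NeZero (t * (3-1) + 2) := ⟨by omega⟩
  classical
  have hNS : ∀ v : ZMod (t * (3 - 1) + 2),
      (GA' t 3).neighborSet v = {v + ((t+1 : ℕ) : ZMod (t * (3-1) + 2))} := by
    intro v
    ext y
    simp only [SimpleGraph.mem_neighborSet, Set.mem_singleton_iff, adj_iff t ht]
    constructor
    · intro h; rw [← h]; ring
    · intro h; rw [h]; ring
  have hdeg : ∀ v : ZMod (t * (3 - 1) + 2), ((GA' t 3).neighborSet v).ncard = 1 := by
    intro v; rw [hNS v, Set.ncard_singleton]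
  refine ⟨hdeg, ?_⟩
  have hdeg' : ∀ v : ZMod (t * (3 - 1) + 2), (GA' t 3).degree v = 1 := by
    intro v
    rw [← SimpleGraph.card_neighborSet_eq_degree]
    rw [← Nat.card_eq_fintype_card, Nat.card_coe_set_eq, hdeg v]
  have hsum := SimpleGraph.sum_degrees_eq_twice_card_edges (GA' t 3)
  simp only [hdeg', Finset.sum_const, smul_eq_mul, mul_one] at hsum
  rw [Finset.card_univ, ZMod.card] at hsum
  have : (GA' t 3).edgeSet.ncard = (GA' t 3).edgeFinset.card := by
    rw [Set.ncard_eq_toFinset_card', SimpleGraph.edgeFinset]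
  omega
end

section
/- Let t ≥ 3, k ≥ 3, and let 0 < a ≤ b be integers. The number of induced subgraphs of GA(t,k)' isomorphic to the complete bipartite graph K_{a,b} equals n·C(k-2, a+b-1) if a ≠ b, and (n/2)·C(k-2, a+b-1) if a = b, where n = t(k-1)+2 and C denotes the binomial coefficient. -/
/-!
Every edge of `GA(t,k)'` has the form `{x, x + (m t + 1)}` with `1 ≤ m ≤ k - 2`; this set of
differences is closed under negation, since `(m t + 1) + ((k - 1 - m) t + 1) = n`. An induced
`K_{a,b}` with sides `A`, `B` is therefore rigid: if `x ∈ A` lies farthest behind a fixed vertex of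
`B`, then `A = x + t I` and `B = x + 1 + t J` with `0 ∈ I`, `I, J ⊆ [0, k - 2]` and `max I < min J`.
Conversely each such configuration is an induced biclique, and different data `(x, I, J)` give
different pairs `(A, B)`. As `(I ∪ J) \ {0}` is an arbitrary `(a + b - 1)`-subset of `[1, k - 2]`,
split after its `a - 1` smallest elements, there are `n C(k - 2, a + b - 1)` ordered pairs `(A, B)`.
Finally a set inducing `K_{a,b}` determines its two sides up to order (the side of a vertex is the
set of its non-neighbours), so it arises from one ordered pair if `a ≠ b` and from two if `a = b`.
-/

open Finset

namespace SimpleGraph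

variable {V W : Type*} (G : SimpleGraph V)

def IsInducedBiclique (A B : Finset V) : Prop :=
  G.IsIndepSet ↑A ∧ G.IsIndepSet ↑B ∧ G.IsCompleteBetween ↑A ↑B

def inducedBicliques (a b : ℕ) : Set (Finset V × Finset V) :=
  {p | G.IsInducedBiclique p.1 p.2 ∧ #p.1 = a ∧ #p.2 = b}

variable {G}

theorem IsInducedBiclique.symm {A B : Finset V} (h : G.IsInducedBiclique A B) :
    G.IsInducedBiclique B A :=
  ⟨h.2.1, h.1, h.2.2.symm⟩

theorem IsInducedBiclique.disjoint {A B : Finset V} (h : G.IsInducedBiclique A B) :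
    Disjoint A B :=
  Finset.disjoint_coe.mp h.2.2.disjoint

theorem IsInducedBiclique.not_adj_left {A B : Finset V} (h : G.IsInducedBiclique A B) {u v : V}
    (hu : u ∈ A) (hv : v ∈ A) : ¬ G.Adj u v := fun huv => h.1 hu hv (G.ne_of_adj huv) huv

theorem IsInducedBiclique.filter_not_adj [DecidableEq V] [DecidableRel G.Adj] {A B : Finset V}
    (h : G.IsInducedBiclique A B) {x : V} (hx : x ∈ A) :
    {w ∈ A ∪ B | ¬ G.Adj x w} = A := by
  ext w
  simp only [mem_filter, mem_union]
  constructor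
  · rintro ⟨hw | hw, hxw⟩
    · exact hw
    · exact absurd (h.2.2 hx hw) hxw
  · exact fun hw => ⟨Or.inl hw, h.not_adj_left hx hw⟩

theorem IsInducedBiclique.eq_or_eq_swap [DecidableEq V] {A B A' B' : Finset V}
    (h : G.IsInducedBiclique A B) (h' : G.IsInducedBiclique A' B') (hS : A ∪ B = A' ∪ B')
    (hA : A.Nonempty) : (A', B') = (A, B) ∨ (A', B') = (B, A) := by
  classical
  obtain ⟨x, hx⟩ := hA
  have hx' : x ∈ A' ∪ B' := hS ▸ mem_union_left B hx
  rcases mem_union.mp hx' with hxA' | hxB'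
  · have hAA' : A' = A := by
      rw [← h.filter_not_adj hx, hS, h'.filter_not_adj hxA']
    left
    rw [hAA', ← union_sdiff_cancel_left h'.disjoint, ← hS, hAA', union_sdiff_cancel_left h.disjoint]
  · have hB'A : B' = A := by
      rw [← h.filter_not_adj hx, hS, union_comm, h'.symm.filter_not_adj hxB']
    right
    rw [hB'A, ← union_sdiff_cancel_right h'.disjoint, ← hS, hB'A,
      union_sdiff_cancel_left h.disjoint]

theorem nonempty_induce_iso_iff_exists_embedding {S : Set V} {H : SimpleGraph W} :
    Nonempty (G.induce S ≃g H) ↔ ∃ f : H ↪g G, Set.range f = S := by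
  constructor
  · rintro ⟨e⟩
    exact ⟨(Embedding.induce S).comp e.symm.toEmbedding,
      (e.symm.surjective.range_comp _).trans Subtype.range_coe⟩
  · rintro ⟨f, rfl⟩
    exact ⟨f.isoInduceRange.symm⟩

theorem exists_embedding_completeBipartiteGraph_iff {α β : Type*} [Fintype α] [Fintype β]
    [DecidableEq V] {S : Finset V} :
    (∃ f : completeBipartiteGraph α β ↪g G, Set.range f = ↑S) ↔
      ∃ A B, G.IsInducedBiclique A B ∧ #A = Fintype.card α ∧ #B = Fintype.card β ∧ A ∪ B = S := by
  constructor
  · rintro ⟨f, hf⟩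
    refine ⟨univ.map (.trans .inl f.toEmbedding), univ.map (.trans .inr f.toEmbedding),
      ⟨?_, ?_, ?_⟩, by simp, by simp, ?_⟩
    · rw [coe_map]
      rintro _ ⟨i, -, rfl⟩ _ ⟨j, -, rfl⟩ -
      simp
    · rw [coe_map]
      rintro _ ⟨i, -, rfl⟩ _ ⟨j, -, rfl⟩ -
      simp
    · rw [coe_map, coe_map]
      rintro _ ⟨i, -, rfl⟩ _ ⟨j, -, rfl⟩
      simp
    · rw [← coe_inj, ← hf]
      ext v
      simp [Sum.exists]
  · rintro ⟨A, B, h, hA, hB, rfl⟩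
    let eA : α ≃ A := Fintype.equivOfCardEq (by rw [Fintype.card_coe, hA])
    let eB : β ≃ B := Fintype.equivOfCardEq (by rw [Fintype.card_coe, hB])
    have hdisj : ∀ i j, (eA i : V) ≠ eB j := fun i j =>
      Finset.disjoint_left.mp h.disjoint (eA i).2 ∘ (· ▸ (eB j).2)
    refine ⟨⟨⟨Sum.elim (Subtype.val ∘ eA) (Subtype.val ∘ eB),
      (Subtype.val_injective.comp eA.injective).sumElim
        (Subtype.val_injective.comp eB.injective) hdisj⟩, ?_⟩, ?_⟩
    · rintro (i | i) (j | j)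
      · simpa using h.not_adj_left (eA i).2 (eA j).2
      · simpa using h.2.2 (eA i).2 (eB j).2
      · simpa using (h.2.2 (eA j).2 (eB i).2).symm
      · simpa using h.symm.not_adj_left (eB i).2 (eB j).2
    · simp [Set.Sum.elim_range, Set.range_comp, eA.surjective.range_eq, eB.surjective.range_eq]

theorem setOf_nonempty_induce_iso_completeBipartiteGraph_eq_image [DecidableEq V] (a b : ℕ) :
    {S : Finset V | Nonempty (G.induce ↑S ≃g completeBipartiteGraph (Fin a) (Fin b))} =
      (fun p => p.1 ∪ p.2) '' G.inducedBicliques a b := by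
  ext S
  rw [Set.mem_ofPred_eq, nonempty_induce_iso_iff_exists_embedding,
    exists_embedding_completeBipartiteGraph_iff]
  simp [inducedBicliques, Set.mem_ofPred_eq, and_assoc]

theorem ncard_setOf_nonempty_induce_iso_completeBipartiteGraph_mul [Fintype V] [DecidableEq V]
    {a b : ℕ} (ha : 0 < a) :
    {S : Finset V | Nonempty (G.induce ↑S ≃g completeBipartiteGraph (Fin a) (Fin b))}.ncard *
      (if a = b then 2 else 1) = (G.inducedBicliques a b).ncard := by
  set P := (Set.toFinite (G.inducedBicliques a b)).toFinset
  have hP (p) : p ∈ P ↔ G.IsInducedBiclique p.1 p.2 ∧ #p.1 = a ∧ #p.2 = b :=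
    Set.Finite.mem_toFinset _
  have hset : {S : Finset V | Nonempty (G.induce ↑S ≃g completeBipartiteGraph (Fin a) (Fin b))} =
      ↑(P.image fun p => p.1 ∪ p.2) := by
    rw [setOf_nonempty_induce_iso_completeBipartiteGraph_eq_image, coe_image,
      Set.Finite.coe_toFinset]
  have hne {p : Finset V × Finset V} (hp : p ∈ P) : p.1.Nonempty := by
    rw [← card_pos, ((hP p).mp hp).2.1]; exact ha
  rw [hset, Set.ncard_coe_finset, Set.ncard_eq_toFinset_card _ (Set.toFinite _)]
  split_ifs with hab
  · subst hab
    rw [card_eq_sum_card_image (fun p => p.1 ∪ p.2) P, sum_const_nat]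
    simp only [mem_image]
    rintro _ ⟨⟨A, B⟩, hp, rfl⟩
    have hfib : {q ∈ P | q.1 ∪ q.2 = A ∪ B} = {(A, B), (B, A)} := by
      ext ⟨A', B'⟩
      simp only [mem_filter, mem_insert, mem_singleton]
      constructor
      · rintro ⟨hq, hqS⟩
        exact ((hP _).mp hp).1.eq_or_eq_swap ((hP _).mp hq).1 hqS.symm (hne hp)
      · rintro (h | h) <;> obtain ⟨rfl, rfl⟩ := Prod.ext_iff.mp h
        · exact ⟨hp, rfl⟩
        · obtain ⟨h, hA, hB⟩ := (hP _).mp hp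
          exact ⟨(hP _).mpr ⟨h.symm, hB, hA⟩, union_comm _ _⟩
    rw [hfib, card_pair]
    intro hAB
    have hdisj := ((hP _).mp hp).1.disjoint
    rw [(Prod.mk.inj hAB).1, disjoint_self_iff_empty] at hdisj
    exact (hne hp).ne_empty ((Prod.mk.inj hAB).1.trans hdisj)
  · rw [mul_one, card_image_of_injOn]
    rintro ⟨A, B⟩ hp ⟨A', B'⟩ hq hpq
    obtain ⟨h, hA, hB⟩ := (hP _).mp hp
    obtain ⟨h', hA', hB'⟩ := (hP _).mp hq
    rcases h.eq_or_eq_swap h' hpq (hne hp) with h | h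
    · exact h.symm
    · obtain ⟨rfl, rfl⟩ := Prod.ext_iff.mp h
      exact absurd (hA.symm.trans hB') hab

end SimpleGraph

namespace Finset

variable {α : Type*} [LinearOrder α]

def orderedPairs (s : Finset α) (a b : ℕ) : Finset (Finset α × Finset α) :=
  {p ∈ s.powersetCard a ×ˢ s.powersetCard b | ∀ i ∈ p.1, ∀ j ∈ p.2, i < j}

theorem mem_orderedPairs {s : Finset α} {a b : ℕ} {I J : Finset α} :
    (I, J) ∈ orderedPairs s a b ↔
      (I ⊆ s ∧ #I = a) ∧ (J ⊆ s ∧ #J = b) ∧ ∀ i ∈ I, ∀ j ∈ J, i < j := by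
  simp [orderedPairs, mem_powersetCard, and_assoc]

theorem disjoint_of_forall_lt {I J : Finset α} (hIJ : ∀ i ∈ I, ∀ j ∈ J, i < j) : Disjoint I J :=
  disjoint_left.mpr fun i hi hj => lt_irrefl i (hIJ i hi i hj)

theorem subset_of_union_eq_of_card_le {I J I' J' : Finset α} (hIJ : ∀ i ∈ I, ∀ j ∈ J, i < j)
    (hIJ' : ∀ i ∈ I', ∀ j ∈ J', i < j) (hU : I ∪ J = I' ∪ J') (hcard : #I' ≤ #I) : I' ⊆ I := by
  intro u hu
  by_contra huI
  have hu' : u ∈ I ∪ J := hU ▸ mem_union_left J' hu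
  have huJ : u ∈ J := (mem_union.mp hu').resolve_left huI
  have hsub : I ⊆ I'.erase u := by
    intro w hw
    have hwI' : w ∈ I' ∪ J' := hU ▸ mem_union_left J hw
    have hwu : w < u := hIJ w hw u huJ
    rcases mem_union.mp hwI' with hw' | hw'
    · exact mem_erase.mpr ⟨hwu.ne, hw'⟩
    · exact absurd (hIJ' u hu w hw') (lt_asymm hwu)
  have := card_le_card hsub
  rw [card_erase_of_mem hu] at this
  have := card_pos.mpr ⟨u, hu⟩
  omega

theorem exists_mem_orderedPairs_union_eq {s U : Finset α} {a b : ℕ} (hUs : U ⊆ s)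
    (hU : #U = a + b) : ∃ p ∈ orderedPairs s a b, p.1 ∪ p.2 = U := by
  set f := U.orderEmbOfFin hU
  refine ⟨(univ.map ((Fin.castAddEmb b).trans f.toEmbedding),
    univ.map ((Fin.natAddEmb a).trans f.toEmbedding)), ?_, ?_⟩
  · refine mem_orderedPairs.mpr ⟨⟨?_, by simp⟩, ⟨?_, by simp⟩, ?_⟩
    · intro w hw
      obtain ⟨i, -, rfl⟩ := mem_map.mp hw
      exact hUs (U.orderEmbOfFin_mem hU _)
    · intro w hw
      obtain ⟨i, -, rfl⟩ := mem_map.mp hw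
      exact hUs (U.orderEmbOfFin_mem hU _)
    · simp only [mem_map, mem_univ, true_and]
      rintro _ ⟨i, rfl⟩ _ ⟨j, rfl⟩
      refine f.lt_iff_lt.mpr (Fin.lt_def.mpr ?_)
      simp only [Fin.coe_castAddEmb, Fin.val_castAdd, Fin.natAddEmb_apply, Fin.val_natAdd]
      omega
  · show _ ∪ _ = U
    conv_rhs => rw [← U.image_orderEmbOfFin_univ hU]
    ext w
    simp only [mem_union, mem_map, mem_image, mem_univ, true_and]
    constructor
    · rintro (⟨i, rfl⟩ | ⟨j, rfl⟩)
      exacts [⟨_, rfl⟩, ⟨_, rfl⟩]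
    · rintro ⟨i, rfl⟩
      induction i using Fin.addCases with
      | left i => exact Or.inl ⟨i, rfl⟩
      | right j => exact Or.inr ⟨j, rfl⟩

theorem card_orderedPairs (s : Finset α) (a b : ℕ) :
    #(orderedPairs s a b) = (#s).choose (a + b) := by
  rw [← card_powersetCard]
  refine card_bij (fun p _ => p.1 ∪ p.2) ?_ ?_ ?_
  · rintro ⟨I, J⟩ hp
    obtain ⟨⟨hIs, hI⟩, ⟨hJs, hJ⟩, hIJ⟩ := mem_orderedPairs.mp hp
    refine mem_powersetCard.mpr ⟨union_subset hIs hJs, ?_⟩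
    rw [card_union_of_disjoint (disjoint_of_forall_lt hIJ), hI, hJ]
  · rintro ⟨I, J⟩ hp ⟨I', J'⟩ hp' (hU : I ∪ J = I' ∪ J')
    obtain ⟨⟨-, hI⟩, -, hIJ⟩ := mem_orderedPairs.mp hp
    obtain ⟨⟨-, hI'⟩, -, hIJ'⟩ := mem_orderedPairs.mp hp'
    have hII' : I = I' :=
      (subset_of_union_eq_of_card_le hIJ' hIJ hU.symm (hI.trans hI'.symm).le).antisymm
        (subset_of_union_eq_of_card_le hIJ hIJ' hU (hI'.trans hI.symm).le)
    subst hII'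
    rw [Prod.mk.injEq, ← union_sdiff_cancel_left (disjoint_of_forall_lt hIJ), hU,
      union_sdiff_cancel_left (disjoint_of_forall_lt hIJ')]
    exact ⟨rfl, rfl⟩
  · intro U hU
    obtain ⟨hUs, hU⟩ := mem_powersetCard.mp hU
    obtain ⟨p, hp, hpU⟩ := exists_mem_orderedPairs_union_eq hUs hU
    exact ⟨p, hp, hpU⟩

end Finset

theorem ZMod.natCast_inj_of_lt {n p q : ℕ} (hp : p < n) (hq : q < n)
    (h : (p : ZMod n) = q) : p = q := by
  rwa [ZMod.natCast_eq_natCast_iff', Nat.mod_eq_of_lt hp, Nat.mod_eq_of_lt hq] at h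


namespace GA'

variable {t k : ℕ}

local notation "N" => t * (k - 1) + 2

theorem mul_add_lt_of_le {c e : ℕ} (hc : c ≤ k - 2) (he : e ≤ 1) : c * t + e < N := by
  have : c * t ≤ (k - 1) * t := Nat.mul_le_mul_right t (by omega)
  rw [Nat.mul_comm t]
  omega

theorem mul_lt_of_le {c : ℕ} (hc : c ≤ k - 2) : c * t < N := mul_add_lt_of_le hc zero_le_one

theorem natCast_mul_ne_natCast_mul_add_one (ht : 2 ≤ t) {i j : ℕ} (hi : i ≤ k - 2)
    (hj : j ≤ k - 2) :
    ((i * t : ℕ) : ZMod N) ≠ ((j * t + 1 : ℕ) : ZMod N) := by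
  intro h
  have := congrArg (· % t) (ZMod.natCast_inj_of_lt (mul_lt_of_le hi) (mul_add_lt_of_le hj le_rfl) h)
  simp [Nat.mod_eq_of_lt ht] at this

theorem natCast_mul_inj (ht : 3 ≤ t) {i j : ℕ} (hi : i ≤ 2 * (k - 2)) (hj : j ≤ 2 * (k - 2))
    (h : ((i * t : ℕ) : ZMod N) = ((j * t : ℕ) : ZMod N)) : i = j := by
  wlog hij : i ≤ j generalizing i j
  · exact (this hj hi h.symm (by omega)).symm
  -- `(j - i) t` is a multiple of `N` below `2 N`, and it is not `N` because `N ≡ 2 (mod t)`.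
  obtain ⟨q, hq⟩ := (Nat.modEq_iff_dvd' (Nat.mul_le_mul_right t hij)).mp
    ((ZMod.natCast_eq_natCast_iff _ _ _).mp h)
  rw [← Nat.sub_mul] at hq
  have hlt : (j - i) * t < 2 * N := by
    have : (j - i) * t ≤ 2 * (k - 2) * t := Nat.mul_le_mul_right t (by omega)
    have : 2 * (k - 2) * t ≤ 2 * ((k - 1) * t) := by
      rw [Nat.mul_assoc]; exact Nat.mul_le_mul_left 2 (Nat.mul_le_mul_right t (by omega))
    rw [Nat.mul_comm t]; omega
  have hq2 : q < 2 := by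
    by_contra! h2
    have : N * 2 ≤ N * q := Nat.mul_le_mul_left N h2
    omega
  interval_cases q
  · rw [mul_zero, Nat.mul_eq_zero] at hq
    omega
  · have h2 : t ∣ 2 :=
      (Nat.dvd_add_right (Dvd.intro _ rfl)).mp (Dvd.intro_left _ (hq.trans (mul_one N)))
    have := Nat.le_of_dvd two_pos h2
    omega

theorem rel_iff (ht : 2 ≤ t) (d : ZMod N) :
    (d.val % t = 1 % t ∧ d.val ≠ 1 ∧ d.val ≠ t * (k - 1) + 1) ↔
      ∃ m, 1 ≤ m ∧ m ≤ k - 2 ∧ d = ((m * t + 1 : ℕ) : ZMod N) := by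
  constructor
  · rintro ⟨hmod, h1, hN⟩
    rw [Nat.mod_eq_of_lt ht] at hmod
    have hd : t * (d.val / t) + 1 = d.val := by have := Nat.div_add_mod d.val t; omega
    have hlt := ZMod.val_lt d
    refine ⟨d.val / t, Nat.pos_of_ne_zero fun h0 => ?_, ?_, ?_⟩
    · rw [h0, mul_zero] at hd
      omega
    · by_contra! hk
      have : t * (k - 1) ≤ t * (d.val / t) := Nat.mul_le_mul_left t (by omega)
      omega
    · rw [Nat.mul_comm (d.val / t) t, hd, ZMod.natCast_zmod_val]
  · rintro ⟨m, hm1, hmk, rfl⟩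
    have hmt : t ≤ m * t := Nat.le_mul_of_pos_left t hm1
    have hmk' : m * t + t ≤ t * (k - 1) := by
      rw [Nat.mul_comm t, ← Nat.succ_mul]; exact Nat.mul_le_mul_right t (by omega)
    rw [ZMod.val_cast_of_lt (mul_add_lt_of_le hmk le_rfl)]
    exact ⟨by rw [Nat.mul_comm, Nat.mul_add_mod], by omega, by omega⟩

theorem neg_natCast_mul_add_one {m : ℕ} (hmk : m ≤ k - 1) :
    -((m * t + 1 : ℕ) : ZMod N) = (((k - 1 - m) * t + 1 : ℕ) : ZMod N) := by
  refine neg_eq_of_add_eq_zero_left ?_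
  rw [← Nat.cast_add, ← ZMod.natCast_self]
  congr 1
  rw [Nat.mul_comm t, ← Nat.sub_add_cancel hmk, Nat.add_sub_cancel, Nat.add_mul]
  ring

theorem adj_iff (ht : 2 ≤ t) {x y : ZMod N} :
    (GA' t k).Adj x y ↔ ∃ m, 1 ≤ m ∧ m ≤ k - 2 ∧ y = x + ((m * t + 1 : ℕ) : ZMod N) := by
  rw [GA', SimpleGraph.fromRel_adj, rel_iff ht, rel_iff ht]
  constructor
  · rintro ⟨-, ⟨m, hm1, hmk, hm⟩ | ⟨m, hm1, hmk, hm⟩⟩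
    · exact ⟨m, hm1, hmk, by rw [← hm]; ring⟩
    · refine ⟨k - 1 - m, by omega, by omega, ?_⟩
      rw [← neg_natCast_mul_add_one (by omega), ← hm]
      ring
  · rintro ⟨m, hm1, hmk, rfl⟩
    refine ⟨fun h => ?_, Or.inl ⟨m, hm1, hmk, by ring⟩⟩
    have := ZMod.natCast_inj_of_lt (mul_add_lt_of_le hmk le_rfl) (by omega : 0 < N)
      (by rwa [Nat.cast_zero, ← left_eq_add])
    omega

def progression (x : ZMod N) (I : Finset ℕ) : Finset (ZMod N) :=
  I.image fun c => x + ((c * t : ℕ) : ZMod N)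

def level (x u : ZMod N) : ℕ := (u - x).val / t

theorem level_add_natCast_mul (ht : 0 < t) {c : ℕ} (hc : c ≤ k - 2) (x : ZMod N) :
    level x (x + ((c * t : ℕ) : ZMod N)) = c := by
  rw [level, add_sub_cancel_left, ZMod.val_cast_of_lt (mul_lt_of_le hc),
    Nat.mul_div_cancel c ht]

theorem image_level_progression (ht : 0 < t) {I : Finset ℕ} (hI : ∀ c ∈ I, c ≤ k - 2)
    (x : ZMod N) : (progression x I).image (level x) = I := by
  rw [progression, image_image]
  exact (image_congr fun c hc => level_add_natCast_mul ht (hI c hc) x).trans image_id'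

theorem card_progression (ht : 0 < t) {I : Finset ℕ} (hI : ∀ c ∈ I, c ≤ k - 2) (x : ZMod N) :
    #(progression x I) = #I :=
  card_image_of_injOn fun c hc c' hc' h => by
    rw [← level_add_natCast_mul ht (hI c hc) x, ← level_add_natCast_mul ht (hI c' hc') x]
    exact congrArg (level x) h

theorem add_natCast_mul_mem_progression_iff (ht : 0 < t) {I : Finset ℕ}
    (hI : ∀ c ∈ I, c ≤ k - 2) {c : ℕ} (hc : c ≤ k - 2) (x : ZMod N) :
    x + ((c * t : ℕ) : ZMod N) ∈ progression x I ↔ c ∈ I := by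
  refine ⟨fun h => ?_, mem_image_of_mem _⟩
  rw [← image_level_progression ht hI x, ← level_add_natCast_mul ht hc x]
  exact mem_image_of_mem _ h

theorem exists_progression_eq (ht : 0 < t) {x : ZMod N} {A : Finset (ZMod N)}
    (hA : ∀ u ∈ A, ∃ c ≤ k - 2, u = x + ((c * t : ℕ) : ZMod N)) :
    ∃ I, (∀ c ∈ I, c ≤ k - 2) ∧ progression x I = A := by
  refine ⟨A.image (level x), ?_, ?_⟩
  · simp only [mem_image]
    rintro _ ⟨u, hu, rfl⟩
    obtain ⟨c, hc, rfl⟩ := hA u hu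
    rwa [level_add_natCast_mul ht hc]
  · rw [progression, image_image]
    refine (image_congr fun u hu => ?_).trans image_id'
    obtain ⟨c, hc, rfl⟩ := hA u hu
    simp only [Function.comp_apply, level_add_natCast_mul ht hc]

theorem add_natCast_mul_sub {c c' : ℕ} (h : c ≤ c') (x : ZMod N) :
    x + ((c' * t : ℕ) : ZMod N) = x + ((c * t : ℕ) : ZMod N) + (((c' - c) * t : ℕ) : ZMod N) := by
  rw [add_assoc, ← Nat.cast_add, ← Nat.add_mul, Nat.add_sub_cancel' h]

theorem not_adj_add_natCast_mul (ht : 2 ≤ t) {d : ℕ} (hd : d ≤ k - 2) (y : ZMod N) :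
    ¬ (GA' t k).Adj y (y + ((d * t : ℕ) : ZMod N)) := by
  rw [adj_iff ht]
  rintro ⟨m, -, hmk, h⟩
  exact natCast_mul_ne_natCast_mul_add_one ht hd hmk (add_left_cancel h)

theorem isIndepSet_progression (ht : 2 ≤ t) {I : Finset ℕ} (hI : ∀ c ∈ I, c ≤ k - 2)
    (x : ZMod N) : (GA' t k).IsIndepSet ↑(progression x I) := by
  rw [progression, coe_image]
  rintro _ ⟨c, hc, rfl⟩ _ ⟨c', hc', rfl⟩ -
  dsimp only
  rcases le_total c c' with h | h
  · rw [add_natCast_mul_sub h]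
    exact not_adj_add_natCast_mul ht (by have := hI c' hc'; omega) _
  · rw [add_natCast_mul_sub h]
    exact fun hadj => not_adj_add_natCast_mul ht (by have := hI c hc; omega) _ hadj.symm

theorem adj_add_natCast_mul_iff (ht : 3 ≤ t) {c j : ℕ} (hc : c ≤ k - 2) (hj : j ≤ k - 2)
    (x : ZMod N) :
    (GA' t k).Adj (x + ((c * t : ℕ) : ZMod N)) (x + 1 + ((j * t : ℕ) : ZMod N)) ↔ c < j := by
  rw [adj_iff (by omega)]
  constructor
  · rintro ⟨m, hm1, hmk, h⟩
    have hjm : ((j * t : ℕ) : ZMod N) = (((c + m) * t : ℕ) : ZMod N) := by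
      push_cast at h ⊢
      linear_combination h
    have := natCast_mul_inj ht (by omega) (by omega) hjm
    omega
  · intro hcj
    refine ⟨j - c, by omega, by omega, ?_⟩
    push_cast [Nat.cast_sub hcj.le]
    ring

theorem isInducedBiclique_progression (ht : 3 ≤ t) {I J : Finset ℕ} (hI : ∀ c ∈ I, c ≤ k - 2)
    (hJ : ∀ c ∈ J, c ≤ k - 2) (hIJ : ∀ i ∈ I, ∀ j ∈ J, i < j) (x : ZMod N) :
    (GA' t k).IsInducedBiclique (progression x I) (progression (x + 1) J) := by
  refine ⟨isIndepSet_progression (by omega) hI x, isIndepSet_progression (by omega) hJ (x + 1), ?_⟩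
  rw [progression, progression, coe_image, coe_image]
  rintro _ ⟨i, hi, rfl⟩ _ ⟨j, hj, rfl⟩
  exact (adj_add_natCast_mul_iff ht (hI i hi) (hJ j hj) x).mpr (hIJ i hi j hj)

theorem self_mem_progression {I : Finset ℕ} (h0 : 0 ∈ I) (x : ZMod N) : x ∈ progression x I :=
  mem_image.mpr ⟨0, h0, by simp⟩

theorem exists_progression_of_isCompleteBetween (ht : 3 ≤ t) {A B : Finset (ZMod N)}
    (hA : A.Nonempty) (hB : B.Nonempty) (hAB : (GA' t k).IsCompleteBetween ↑A ↑B) :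
    ∃ x I J, (∀ c ∈ I, c ≤ k - 2) ∧ (∀ c ∈ J, c ≤ k - 2) ∧ 0 ∈ I ∧
      (∀ i ∈ I, ∀ j ∈ J, i < j) ∧ progression x I = A ∧ progression (x + 1) J = B := by
  -- With `x ∈ A` farthest behind `v₀ ∈ B`, every `u ∈ A` lies a multiple of `t` after `x`.
  obtain ⟨v₀, hv₀⟩ := hB
  obtain ⟨x, hx, hxmax⟩ := A.exists_max_image (fun u => (v₀ - u).val) hA
  obtain ⟨p, -, hpk, hxv₀⟩ := (adj_iff (by omega)).mp (hAB hx hv₀)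
  have hA' : ∀ u ∈ A, ∃ c ≤ k - 2, u = x + ((c * t : ℕ) : ZMod N) := by
    intro u hu
    obtain ⟨m, -, hmk, huv₀⟩ := (adj_iff (by omega)).mp (hAB hu hv₀)
    have hmp : m ≤ p := by
      have hle := hxmax u hu
      have e₁ : v₀ - u = ((m * t + 1 : ℕ) : ZMod N) := by rw [huv₀]; ring
      have e₂ : v₀ - x = ((p * t + 1 : ℕ) : ZMod N) := by rw [hxv₀]; ring
      rw [e₁, e₂, ZMod.val_cast_of_lt (mul_add_lt_of_le hmk le_rfl),
        ZMod.val_cast_of_lt (mul_add_lt_of_le hpk le_rfl)] at hle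
      exact Nat.le_of_mul_le_mul_right (by omega) (by omega : 0 < t)
    refine ⟨p - m, by omega, ?_⟩
    have := huv₀.symm.trans hxv₀
    push_cast [Nat.cast_sub hmp] at this ⊢
    linear_combination this
  have hB' : ∀ v ∈ B, ∃ j ≤ k - 2, v = x + 1 + ((j * t : ℕ) : ZMod N) := by
    intro v hv
    obtain ⟨j, -, hj, rfl⟩ := (adj_iff (by omega)).mp (hAB hx hv)
    exact ⟨j, hj, by push_cast; ring⟩
  obtain ⟨I, hI, rfl⟩ := exists_progression_eq (by omega) hA'
  obtain ⟨J, hJ, rfl⟩ := exists_progression_eq (by omega) hB'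
  refine ⟨x, I, J, hI, hJ, ?_, fun i hi j hj => ?_, rfl, rfl⟩
  · refine (add_natCast_mul_mem_progression_iff (by omega) hI (Nat.zero_le _) x).mp ?_
    rwa [zero_mul, Nat.cast_zero, add_zero]
  · exact (adj_add_natCast_mul_iff ht (hI i hi) (hJ j hj) x).mp
      (hAB (mem_image_of_mem _ hi) (mem_image_of_mem _ hj))

-- `0` is added to `I` so that both index sets range over subsets of `[1, k - 2]`.
def bicliqueOf (p : ZMod N × Finset ℕ × Finset ℕ) : Finset (ZMod N) × Finset (ZMod N) :=
  (progression p.1 (insert 0 p.2.1), progression (p.1 + 1) p.2.2)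

theorem forall_mem_insert_zero_le {I : Finset ℕ} (hI : I ⊆ Icc 1 (k - 2)) :
    ∀ c ∈ insert 0 I, c ≤ k - 2 := by
  simp only [mem_insert, forall_eq_or_imp]
  exact ⟨Nat.zero_le _, fun c hc => (mem_Icc.mp (hI hc)).2⟩

theorem bicliqueOf_mem_inducedBicliques (ht : 3 ≤ t) {a b : ℕ} (ha : 0 < a) {I J : Finset ℕ}
    (h : (I, J) ∈ orderedPairs (Icc 1 (k - 2)) (a - 1) b) (x : ZMod N) :
    bicliqueOf (x, I, J) ∈ (GA' t k).inducedBicliques a b := by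
  obtain ⟨⟨hIs, hI⟩, ⟨hJs, hJ⟩, hIJ⟩ := mem_orderedPairs.mp h
  have hJk : ∀ c ∈ J, c ≤ k - 2 := fun c hc => (mem_Icc.mp (hJs hc)).2
  have hIJ' : ∀ i ∈ insert 0 I, ∀ j ∈ J, i < j := by
    simp only [mem_insert, forall_eq_or_imp]
    exact ⟨fun j hj => (mem_Icc.mp (hJs hj)).1, hIJ⟩
  refine ⟨isInducedBiclique_progression ht (forall_mem_insert_zero_le hIs) hJk hIJ' x, ?_, ?_⟩
  · rw [bicliqueOf, card_progression (by omega) (forall_mem_insert_zero_le hIs),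
      card_insert_of_notMem fun h0 => by simpa using hIs h0, hI]
    omega
  · rw [bicliqueOf, card_progression (by omega) hJk, hJ]

theorem exists_bicliqueOf_eq (ht : 3 ≤ t) {a b : ℕ} (ha : 0 < a) (hb : 0 < b)
    {p : Finset (ZMod N) × Finset (ZMod N)} (hp : p ∈ (GA' t k).inducedBicliques a b) :
    ∃ q ∈ univ ×ˢ orderedPairs (Icc 1 (k - 2)) (a - 1) b, bicliqueOf q = p := by
  obtain ⟨A, B⟩ := p
  obtain ⟨hAB, hA, hB⟩ := hp
  obtain ⟨x, I, J, hI, hJ, h0, hIJ, rfl, rfl⟩ := exists_progression_of_isCompleteBetween ht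
    (card_pos.mp (hA ▸ ha)) (card_pos.mp (hB ▸ hb)) hAB.2.2
  refine ⟨(x, I.erase 0, J), mem_product.mpr ⟨mem_univ _, mem_orderedPairs.mpr
    ⟨⟨fun c hc => ?_, ?_⟩, ⟨fun j hj => ?_, ?_⟩,
      fun i hi j hj => hIJ i (mem_of_mem_erase hi) j hj⟩⟩,
    by rw [bicliqueOf, insert_erase h0]⟩
  · obtain ⟨hc0, hcI⟩ := mem_erase.mp hc
    exact mem_Icc.mpr ⟨by omega, hI c hcI⟩
  · rw [card_erase_of_mem h0, ← card_progression (by omega) hI x, hA]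
  · exact mem_Icc.mpr ⟨hIJ 0 h0 j hj, hJ j hj⟩
  · rw [← card_progression (by omega) hJ (x + 1), hB]

theorem injOn_bicliqueOf (ht : 3 ≤ t) :
    Set.InjOn (bicliqueOf (t := t) (k := k))
      {p | p.2.1 ⊆ Icc 1 (k - 2) ∧ p.2.2 ⊆ Icc 1 (k - 2)} := by
  rintro ⟨x, I, J⟩ ⟨hI, hJ⟩ ⟨x', I', J'⟩ ⟨hI', hJ'⟩ h
  dsimp only at hI hJ hI' hJ'
  obtain ⟨hA, hB⟩ := Prod.mk.inj h
  have hIk := forall_mem_insert_zero_le hI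
  have hIk' := forall_mem_insert_zero_le hI'
  have hJk : ∀ c ∈ J, c ≤ k - 2 := fun c hc => (mem_Icc.mp (hJ hc)).2
  have hJk' : ∀ c ∈ J', c ≤ k - 2 := fun c hc => (mem_Icc.mp (hJ' hc)).2
  obtain rfl : x = x' := by
    obtain ⟨c, hc, hxc⟩ := mem_image.mp (hA ▸ self_mem_progression (mem_insert_self 0 I') x')
    obtain ⟨c', hc', hxc'⟩ := mem_image.mp (hA ▸ self_mem_progression (mem_insert_self 0 I) x)
    have hcc' : (((c + c') * t : ℕ) : ZMod N) = ((0 * t : ℕ) : ZMod N) := by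
      push_cast at hxc hxc' ⊢
      linear_combination hxc + hxc'
    have := natCast_mul_inj ht (by linarith [hIk c hc, hIk' c' hc']) (by omega) hcc'
    rw [← hxc, show c = 0 by omega, zero_mul, Nat.cast_zero, add_zero]
  have hII' : insert 0 I = insert 0 I' := by
    rw [← image_level_progression (by omega) hIk x, hA, image_level_progression (by omega) hIk' x]
  have h0I : 0 ∉ I := fun h0 => by simpa using hI h0
  have h0I' : 0 ∉ I' := fun h0 => by simpa using hI' h0
  rw [← erase_insert h0I, hII', erase_insert h0I',
    ← image_level_progression (by omega) hJk (x + 1), hB,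
    image_level_progression (by omega) hJk' (x + 1)]

theorem ncard_inducedBicliques (ht : 3 ≤ t) {a b : ℕ} (ha : 0 < a) (hb : 0 < b) :
    ((GA' t k).inducedBicliques a b).ncard = N * (k - 2).choose (a + b - 1) := by
  set Q : Finset (ZMod N × Finset ℕ × Finset ℕ) := univ ×ˢ orderedPairs (Icc 1 (k - 2)) (a - 1) b
  have himage : (GA' t k).inducedBicliques a b = bicliqueOf '' ↑Q := by
    ext p
    constructor
    · intro hp
      obtain ⟨q, hq, rfl⟩ := exists_bicliqueOf_eq ht ha hb hp
      exact ⟨q, hq, rfl⟩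
    · rintro ⟨⟨x, I, J⟩, hq, rfl⟩
      exact bicliqueOf_mem_inducedBicliques ht ha (mem_product.mp hq).2 x
  have hinj : Set.InjOn bicliqueOf (Q : Set (ZMod N × Finset ℕ × Finset ℕ)) := by
    refine (injOn_bicliqueOf ht).mono ?_
    rintro ⟨x, I, J⟩ hq
    obtain ⟨⟨hI, -⟩, ⟨hJ, -⟩, -⟩ := mem_orderedPairs.mp (mem_product.mp hq).2
    exact ⟨hI, hJ⟩
  rw [himage, hinj.ncard_image, Set.ncard_coe_finset, card_product, card_univ, ZMod.card,
    card_orderedPairs, Nat.card_Icc, Nat.sub_add_comm ha]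
  rfl

end GA'

theorem stmt_8_general (t k a b : ℕ) (ht : 3 ≤ t) (ha : 0 < a) (hab : a ≤ b) :
    {S : Finset (ZMod (t * (k - 1) + 2)) |
        Nonempty (SimpleGraph.induce (↑S) (GA' t k) ≃g
          completeBipartiteGraph (Fin a) (Fin b))}.ncard =
      if a = b then (t * (k - 1) + 2) * (k - 2).choose (a + b - 1) / 2
      else (t * (k - 1) + 2) * (k - 2).choose (a + b - 1) := by
  have h := (GA' t k).ncard_setOf_nonempty_induce_iso_completeBipartiteGraph_mul (b := b) ha
  rw [GA'.ncard_inducedBicliques ht ha (by omega)] at h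
  split_ifs at h ⊢
  · omega
  · rwa [mul_one] at h

/-- For `t, k ≥ 3` and `0 < a ≤ b`, the number of vertex subsets of `GA(t,k)'`
inducing a subgraph isomorphic to `K_{a,b}` is `n·C(k-2,a+b-1)` if `a ≠ b` and
`(n/2)·C(k-2,a+b-1)` if `a = b`, where `n = t(k-1)+2`. -/
theorem stmt_8 (t k a b : ℕ) (ht : 3 ≤ t) (hk : 3 ≤ k) (ha : 0 < a) (hab : a ≤ b) :
    {S : Finset (ZMod (t * (k - 1) + 2)) |
        Nonempty (SimpleGraph.induce (↑S) (GA' t k) ≃g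
          completeBipartiteGraph (Fin a) (Fin b))}.ncard =
      if a = b then (t * (k - 1) + 2) * (k - 2).choose (a + b - 1) / 2
      else (t * (k - 1) + 2) * (k - 2).choose (a + b - 1) :=
  stmt_8_general t k a b ht ha hab
end

section
/- Let t ≥ 3 and k ≥ 3, with n = t(k-1)+2. Let S ⊆ Z/nZ induce a complete bipartite subgraph of GA(t,k)' with parts A and B. Then, after a suitable cyclic translation of S, one may write A = {0, t·k_2, ..., t·k_a} and B = {t·c_1 + 1, ..., t·c_b + 1} with 1 ≤ k_2 < ... < k_a < c_1 < ... < c_b ≤ k-2. -/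
private lemma nmodt (t k : ℕ) (ht : 3 ≤ t) : (t * (k - 1) + 2) % t = 2 := by
  rw [Nat.mul_add_mod]
  exact Nat.mod_eq_of_lt (by omega)

private lemma mod_compl (t n d : ℕ) (ht : 3 ≤ t) (hn : n % t = 2) (hdn : d ≤ n)
    (hd : d % t = 1) : (n - d) % t = 1 := by
  have ht0 : 0 < t := by omega
  have hr : (n - d) % t < t := Nat.mod_lt _ ht0
  have hsplit : n = t * ((n - d) / t + d / t) + ((n - d) % t + d % t) := by
    rw [Nat.mul_add]
    have h2 := Nat.div_add_mod (n - d) t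
    have h3 := Nat.div_add_mod d t
    omega
  have key : ((n - d) % t + 1) % t = 2 := by
    have h4 : n % t = ((n - d) % t + d % t) % t := by
      conv_lhs => rw [hsplit]
      rw [Nat.mul_add_mod]
    rw [hd] at h4
    omega
  rcases Nat.lt_or_ge ((n - d) % t + 1) t with h | h
  · rw [Nat.mod_eq_of_lt h] at key; omega
  · have he : (n - d) % t + 1 = t := by omega
    rw [he, Nat.mod_self] at key; omega

private lemma GA'_adj (t k : ℕ) (ht : 3 ≤ t) (hk : 3 ≤ k) (x y : ZMod (t * (k - 1) + 2)) :
    (GA' t k).Adj x y ↔ x ≠ y ∧ (y - x).val % t = 1 ∧ (y - x).val ≠ 1 ∧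
      (y - x).val ≠ t * (k - 1) + 1 := by
  haveI : NeZero (t * (k - 1) + 2) := ⟨by omega⟩
  have h1t : 1 % t = 1 := Nat.mod_eq_of_lt (by omega)
  rw [GA', SimpleGraph.fromRel_adj]
  constructor
  · rintro ⟨hne, h | h⟩
    · rw [h1t] at h
      exact ⟨hne, h.1, h.2.1, h.2.2⟩
    · have hyx : y - x ≠ 0 := sub_ne_zero.mpr (Ne.symm hne)
      have hval : (x - y).val = (t * (k - 1) + 2) - (y - x).val := by
        rw [show x - y = -(y - x) from by ring, ZMod.neg_val, if_neg hyx]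
      have hlt := ZMod.val_lt (y - x)
      have hne0 : (y - x).val ≠ 0 := fun h0 => hyx ((ZMod.val_eq_zero _).mp h0)
      rw [h1t, hval] at h
      obtain ⟨ha, hb, hc⟩ := h
      refine ⟨hne, ?_, by omega, by omega⟩
      have h5 := mod_compl t (t * (k - 1) + 2) ((t * (k - 1) + 2) - (y - x).val) ht
        (nmodt t k ht) (by omega) ha
      rwa [Nat.sub_sub_self (le_of_lt hlt)] at h5
  · rintro ⟨hne, h1, h2, h3⟩
    exact ⟨hne, Or.inl ⟨by rw [h1t]; exact h1, h2, h3⟩⟩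


/-- If `S = A ∪ B` induces a complete bipartite subgraph of `GA(t,k)'` with parts
`A` and `B`, then after a suitable cyclic translation one may write
`A = {0, t·k₂, …, t·k_a}` and `B = {t·c₁+1, …, t·c_b+1}` with
`1 ≤ k₂ < … < k_a < c₁ < … < c_b ≤ k-2`. -/
theorem stmt_9 (t k : ℕ) (ht : 3 ≤ t) (hk : 3 ≤ k)
    (A B : Finset (ZMod (t * (k - 1) + 2)))
    (hAne : A.Nonempty) (hBne : B.Nonempty) (hdisj : Disjoint A B)
    (hcross : ∀ a ∈ A, ∀ b ∈ B, (GA' t k).Adj a b)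
    (hA : ∀ a ∈ A, ∀ a' ∈ A, ¬ (GA' t k).Adj a a')
    (hB : ∀ b ∈ B, ∀ b' ∈ B, ¬ (GA' t k).Adj b b') :
    ∃ z : ZMod (t * (k - 1) + 2), ∃ ks cs : Finset ℕ,
      ks.card = A.card - 1 ∧ cs.card = B.card ∧
      (∀ i ∈ ks, 1 ≤ i ∧ i ≤ k - 2) ∧ (∀ j ∈ cs, 1 ≤ j ∧ j ≤ k - 2) ∧
      (∀ i ∈ ks, ∀ j ∈ cs, i < j) ∧
      A.image (· + z) =
        insert (0 : ZMod (t * (k - 1) + 2))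
          (ks.image fun i => ((t * i : ℕ) : ZMod (t * (k - 1) + 2))) ∧
      B.image (· + z) = cs.image fun j => ((t * j + 1 : ℕ) : ZMod (t * (k - 1) + 2)) := by
  haveI : NeZero (t * (k - 1) + 2) := ⟨by omega⟩
  have ht0 : 0 < t := by omega
  obtain ⟨b₀, hb₀⟩ := hBne
  obtain ⟨p, hpA, hpmin⟩ := Finset.exists_min_image A (fun a => (a - b₀).val) hAne
  -- adjacency facts
  have adj : ∀ a ∈ A, ∀ b ∈ B, (b - a).val % t = 1 ∧ (b - a).val ≠ 1 ∧
      (b - a).val ≠ t * (k - 1) + 1 ∧ b ≠ a := by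
    intro a ha b hb
    have h := (GA'_adj t k ht hk a b).mp (hcross a ha b hb)
    exact ⟨h.2.1, h.2.2.1, h.2.2.2, Ne.symm h.1⟩
  -- structure of B relative to p
  have hBfact : ∀ b ∈ B, (b - p).val = t * ((b - p).val / t) + 1 ∧
      1 ≤ (b - p).val / t ∧ (b - p).val / t ≤ k - 2 := by
    intro b hb
    obtain ⟨h1, h2, h3, hbp⟩ := adj p hpA b hb
    have hlt : (b - p).val < t * (k - 1) + 2 := ZMod.val_lt _
    have hdm := Nat.div_add_mod ((b - p).val) t
    have hc : (b - p).val = t * ((b - p).val / t) + 1 := by omega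
    refine ⟨hc, ?_, ?_⟩
    · rcases Nat.eq_zero_or_pos ((b - p).val / t) with h0 | h0
      · rw [h0, Nat.mul_zero] at hc; omega
      · exact h0
    · by_contra hcon
      have hge : k - 1 ≤ (b - p).val / t := by omega
      have := Nat.mul_le_mul_left t hge
      omega
  -- subtraction formula
  have sub_formula : ∀ a b : ZMod (t * (k - 1) + 2), a ≠ p →
      (b - a).val = ((b - p).val + (t * (k - 1) + 2 - (a - p).val)) % (t * (k - 1) + 2) := by
    intro a b hap
    rw [show b - a = (b - p) - (a - p) from by ring, sub_eq_add_neg, ZMod.val_add,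
      ZMod.neg_val, if_neg (sub_ne_zero.mpr hap)]
  -- structure of A relative to p
  have hAfact : ∀ a ∈ A, (a - p).val % t = 0 ∧ ∀ b ∈ B, (a - p).val + 2 ≤ (b - p).val := by
    intro a ha
    rcases eq_or_ne a p with rfl | hap
    · have h0 : (a - a).val = 0 := by rw [sub_self]; exact ZMod.val_zero
      refine ⟨by rw [h0]; exact Nat.zero_mod t, ?_⟩
      intro b hb
      obtain ⟨hc, hc1, _⟩ := hBfact b hb
      have := Nat.mul_le_mul_left t hc1
      omega
    · have hu1 : (a - p) ≠ 0 := sub_ne_zero.mpr hap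
      have hu0 : (a - p).val ≠ 0 := fun h0 => hu1 ((ZMod.val_eq_zero _).mp h0)
      have hult : (a - p).val < t * (k - 1) + 2 := ZMod.val_lt _
      obtain ⟨hD0, hc0ge, hc0le⟩ := hBfact b₀ hb₀
      obtain ⟨hd1m, hd1ne1, hd1neN, hb0p⟩ := adj p hpA b₀ hb₀
      obtain ⟨hd2m, hd2ne1, hd2neN, hb0a⟩ := adj a ha b₀ hb₀
      have l1 : (b₀ - p).val < t * (k - 1) + 2 := ZMod.val_lt _
      have l2 : (b₀ - a).val < t * (k - 1) + 2 := ZMod.val_lt _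
      have hD2 := sub_formula a b₀ hap
      have hmin2 : (b₀ - a).val ≤ (b₀ - p).val := by
        have h1 := hpmin a ha
        have e1 : (p - b₀).val = t * (k - 1) + 2 - (b₀ - p).val := by
          rw [show p - b₀ = -(b₀ - p) from by ring, ZMod.neg_val,
            if_neg (sub_ne_zero.mpr hb0p)]
        have e2 : (a - b₀).val = t * (k - 1) + 2 - (b₀ - a).val := by
          rw [show a - b₀ = -(b₀ - a) from by ring, ZMod.neg_val,
            if_neg (sub_ne_zero.mpr hb0a)]
        omega
      have hcase : (b₀ - a).val = (b₀ - p).val - (a - p).val ∧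
          (a - p).val ≤ (b₀ - p).val := by
        rcases Nat.lt_or_ge ((b₀ - p).val + (t * (k - 1) + 2 - (a - p).val))
            (t * (k - 1) + 2) with hlt2 | hge2
        · rw [Nat.mod_eq_of_lt hlt2] at hD2
          omega
        · rw [Nat.mod_eq_sub_mod hge2, Nat.mod_eq_of_lt (by omega)] at hD2
          omega
      obtain ⟨hD2eq, hUle⟩ := hcase
      -- U % t = 0
      have hdm2 := Nat.div_add_mod ((b₀ - a).val) t
      have hq2 : (b₀ - a).val = t * ((b₀ - a).val / t) + 1 := by omega
      have hqle : (b₀ - a).val / t ≤ (b₀ - p).val / t := by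
        by_contra hcon
        have := Nat.mul_le_mul_left t (show (b₀ - p).val / t + 1 ≤ (b₀ - a).val / t by omega)
        rw [Nat.mul_add, Nat.mul_one] at this
        omega
      have hexp : t * ((b₀ - a).val / t + ((b₀ - p).val / t - (b₀ - a).val / t))
          = t * ((b₀ - a).val / t) + t * ((b₀ - p).val / t - (b₀ - a).val / t) :=
        Nat.mul_add _ _ _
      rw [show (b₀ - a).val / t + ((b₀ - p).val / t - (b₀ - a).val / t) = (b₀ - p).val / t
        from by omega] at hexp
      have hUeq : (a - p).val = t * ((b₀ - p).val / t - (b₀ - a).val / t) := by omega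
      have hUmod : (a - p).val % t = 0 := by rw [hUeq]; exact Nat.mul_mod_right t _
      refine ⟨hUmod, ?_⟩
      intro b hb
      obtain ⟨hD, hcge, hcle⟩ := hBfact b hb
      obtain ⟨he2m, he2ne1, he2neN, hba⟩ := adj a ha b hb
      have hE := sub_formula a b hap
      have lb1 : (b - p).val < t * (k - 1) + 2 := ZMod.val_lt _
      rcases Nat.lt_or_ge ((b - p).val + (t * (k - 1) + 2 - (a - p).val))
          (t * (k - 1) + 2) with hlt2 | hge2
      · exfalso
        rw [Nat.mod_eq_of_lt hlt2] at hE
        have hmdm := Nat.div_add_mod ((a - p).val) t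
        have hU : (a - p).val = t * ((a - p).val / t) := by omega
        have hmk : (a - p).val / t ≤ k - 1 := by
          by_contra hcon
          have h6 := Nat.mul_le_mul_left t (show k ≤ (a - p).val / t by omega)
          have h7 : t * k = t * (k - 1) + t := by
            have h := Nat.mul_add t (k - 1) 1
            rw [show (k - 1) + 1 = k from by omega] at h
            omega
          omega
        have hmle : t * ((a - p).val / t) ≤ t * (k - 1) := Nat.mul_le_mul_left t hmk
        have hsum : ((b - p).val / t + (k - 1) - (a - p).val / t) + (a - p).val / t
            = (b - p).val / t + (k - 1) := by
          have := Nat.mul_le_mul_left t (show 1 ≤ (b - p).val / t from hcge)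
          omega
        have h8 : t * (((b - p).val / t + (k - 1) - (a - p).val / t) + (a - p).val / t)
            = t * ((b - p).val / t + (k - 1) - (a - p).val / t) + t * ((a - p).val / t) :=
          Nat.mul_add _ _ _
        rw [hsum] at h8
        have h9 : t * ((b - p).val / t + (k - 1))
            = t * ((b - p).val / t) + t * (k - 1) := Nat.mul_add _ _ _
        have hval3 : (b - a).val = t * ((b - p).val / t + (k - 1) - (a - p).val / t) + 3 := by
          omega
        rw [hval3, Nat.mul_add_mod] at he2m
        rcases Nat.lt_or_ge t 4 with h4 | h4
        · have ht3 : t = 3 := by omega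
          rw [ht3] at he2m
          omega
        · rw [Nat.mod_eq_of_lt (by omega)] at he2m
          omega
      · rw [Nat.mod_eq_sub_mod hge2, Nat.mod_eq_of_lt (by omega)] at hE
        have h2le : 2 ≤ (b - a).val := by
          have hne0 : (b - a).val ≠ 0 := by
            intro h0; rw [h0, Nat.zero_mod] at he2m; omega
          omega
        omega
  -- final construction
  have castval : ∀ x : ZMod (t * (k - 1) + 2), ((x.val : ℕ) : ZMod (t * (k - 1) + 2)) = x := by
    intro x
    rw [ZMod.natCast_val, ZMod.cast_id]
  have hAval : ∀ a ∈ A, (a - p).val = t * ((a - p).val / t) := by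
    intro a ha
    have h1 := (hAfact a ha).1
    have h2 := Nat.div_add_mod ((a - p).val) t
    omega
  refine ⟨-p, (A.erase p).image (fun a => (a - p).val / t),
    B.image (fun b => (b - p).val / t), ?_, ?_, ?_, ?_, ?_, ?_, ?_⟩
  · rw [Finset.card_image_of_injOn, Finset.card_erase_of_mem hpA]
    intro a ha a' ha' h
    have haA := Finset.mem_of_mem_erase ha
    have haA' := Finset.mem_of_mem_erase ha'
    have e1 := hAval a haA
    have e2 := hAval a' haA'
    have h2 : (a - p).val / t = (a' - p).val / t := h
    have : (a - p).val = (a' - p).val := by rw [e1, e2, h2]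
    have := ZMod.val_injective _ this
    exact sub_left_inj.mp this
  · rw [Finset.card_image_of_injOn]
    intro b hb b' hb' h
    have e1 := (hBfact b hb).1
    have e2 := (hBfact b' hb').1
    have h2 : (b - p).val / t = (b' - p).val / t := h
    have : (b - p).val = (b' - p).val := by rw [e1, e2, h2]
    have := ZMod.val_injective _ this
    exact sub_left_inj.mp this
  · intro i hi
    obtain ⟨a, ha, rfl⟩ := Finset.mem_image.mp hi
    have haA := Finset.mem_of_mem_erase ha
    have hap := Finset.ne_of_mem_erase ha
    have e1 := hAval a haA
    have hu0 : (a - p).val ≠ 0 := fun h0 =>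
      (sub_ne_zero.mpr hap) ((ZMod.val_eq_zero _).mp h0)
    obtain ⟨_, hble⟩ := hAfact a haA
    have hb1 := hble b₀ hb₀
    obtain ⟨e3, hcge, hcle⟩ := hBfact b₀ hb₀
    constructor
    · rcases Nat.eq_zero_or_pos ((a - p).val / t) with h0 | h0
      · rw [h0, Nat.mul_zero] at e1; omega
      · exact h0
    · -- m < c₀ ≤ k - 2
      have hmc : (a - p).val / t < (b₀ - p).val / t := by
        by_contra hcon
        have := Nat.mul_le_mul_left t (show (b₀ - p).val / t ≤ (a - p).val / t by omega)
        omega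
      omega
  · intro j hj
    obtain ⟨b, hb, rfl⟩ := Finset.mem_image.mp hj
    exact ⟨(hBfact b hb).2.1, (hBfact b hb).2.2⟩
  · intro i hi j hj
    obtain ⟨a, ha, rfl⟩ := Finset.mem_image.mp hi
    obtain ⟨b, hb, rfl⟩ := Finset.mem_image.mp hj
    have haA := Finset.mem_of_mem_erase ha
    have e1 := hAval a haA
    have e2 := (hBfact b hb).1
    have hble := (hAfact a haA).2 b hb
    by_contra hcon
    have := Nat.mul_le_mul_left t (show (b - p).val / t ≤ (a - p).val / t by omega)
    omega
  · ext x
    simp only [Finset.mem_image, Finset.mem_insert]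
    constructor
    · rintro ⟨a, ha, rfl⟩
      rcases eq_or_ne a p with rfl | hap
      · left; exact add_neg_cancel a
      · right
        refine ⟨(a - p).val / t, ⟨a, Finset.mem_erase.mpr ⟨hap, ha⟩, rfl⟩, ?_⟩
        rw [← hAval a ha, castval]
        exact sub_eq_add_neg a p
    · rintro (rfl | ⟨i, ⟨a, ha, rfl⟩, rfl⟩)
      · exact ⟨p, hpA, add_neg_cancel p⟩
      · have haA := Finset.mem_of_mem_erase ha
        refine ⟨a, haA, ?_⟩
        rw [← hAval a haA, castval]
        exact (sub_eq_add_neg a p).symm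
  · ext x
    simp only [Finset.mem_image]
    constructor
    · rintro ⟨b, hb, rfl⟩
      refine ⟨(b - p).val / t, ⟨b, hb, rfl⟩, ?_⟩
      rw [← (hBfact b hb).1, castval]
      exact sub_eq_add_neg b p
    · rintro ⟨j, ⟨b, hb, rfl⟩, rfl⟩
      refine ⟨b, hb, ?_⟩
      rw [← (hBfact b hb).1, castval]
      exact (sub_eq_add_neg b p).symm
end

section
/- For t ≥ 1 and k ≥ 4, every induced matching of size t in GA(t,k)' consists of edges {x, y}, {x+1, y+1}, ..., {x+(t-1), y+(t-1)} for some x ∈ Z_n and some y with y - x ∈ {t+1, t+2, ..., n-t-1} (differences taken in Z_n). -/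
/-- Symmetric "pair-adjacency" relation on natural positions. -/
def EE (t p q : ℕ) : Prop :=
  q ≠ p ∧ Nat.dist p q % t = 1 % t ∧ Nat.dist p q ≠ 1

lemma EE_symm {t p q : ℕ} (h : EE t p q) : EE t q p := by
  obtain ⟨h1, h2, h3⟩ := h
  exact ⟨fun e => h1 e.symm, by rwa [Nat.dist_comm], by rwa [Nat.dist_comm]⟩

lemma ge_t_add_one (t d : ℕ) (ht : 1 ≤ t) (h : d % t = 1 % t)
    (h0 : d ≠ 0) (h1 : d ≠ 1) : t + 1 ≤ d := by
  rcases eq_or_lt_of_le ht with h' | h'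
  · omega
  · have h2 : 1 % t = 1 := Nat.mod_eq_of_lt h'
    rcases lt_or_ge d t with h4 | h4
    · rw [Nat.mod_eq_of_lt h4] at h
      omega
    · rcases eq_or_lt_of_le h4 with h5 | h5
      · rw [← h5, Nat.mod_self] at h
        omega
      · omega

lemma sub_mod_one (t a b : ℕ) (hba : b ≤ a) (h : a % t = (b + 1) % t) :
    (a - b) % t = 1 % t := by
  have h1 : (a - b) + b ≡ 1 + b [MOD t] := by
    rw [Nat.sub_add_cancel hba]
    calc a ≡ b + 1 [MOD t] := h
      _ = 1 + b := by ring
  exact h1.add_right_cancel' b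

lemma add_back_mod (t a b : ℕ) (hba : b ≤ a) (h : (a - b) % t = 1 % t) :
    a % t = (b + 1) % t := by
  have h1 : (a - b) + b ≡ 1 + b [MOD t] := Nat.ModEq.add_right b h
  rw [Nat.sub_add_cancel hba] at h1
  calc a ≡ 1 + b [MOD t] := h1
    _ = b + 1 := by ring

lemma sub_mod_one' (t a b : ℕ) (hba : b ≤ a) (h : a % t = (b + 1) % t) :
    (a - b) % t = 1 % t := by
  have h1 : (a - b) + b ≡ 1 + b [MOD t] := by
    rw [Nat.sub_add_cancel hba]
    calc a ≡ b + 1 [MOD t] := h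
      _ = 1 + b := by ring
  exact h1.add_right_cancel' b

lemma block_lemma (t : ℕ) (B : Finset ℕ) (hcard : B.card = t)
    (hinj : ∀ p ∈ B, ∀ q ∈ B, p % t = q % t → p = q)
    (hforce : ∀ p ∈ B, ∀ q ∈ B, p < q → (q - p) % t = 1 % t → q = p + 1)
    (b : ℕ) (hb : b ∈ B) (hmin : ∀ b' ∈ B, b ≤ b') :
    B = (Finset.range t).image (b + ·) := by
  have ht : 1 ≤ t := by
    rcases Nat.eq_zero_or_pos t with h | h
    · exfalso; rw [h, Finset.card_eq_zero] at hcard; rw [hcard] at hb; simp at hb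
    · exact h
  have himg : B.image (· % t) = Finset.range t := by
    apply Finset.eq_of_subset_of_card_le
    · intro r hr
      simp only [Finset.mem_image] at hr
      obtain ⟨p, _, rfl⟩ := hr
      exact Finset.mem_range.2 (Nat.mod_lt _ ht)
    · rw [Finset.card_range, Finset.card_image_of_injOn, hcard]
      intro p hp q hq h
      exact hinj p hp q hq h
  have hsurj : ∀ r, r < t → ∃ p ∈ B, p % t = r := by
    intro r hr
    have : r ∈ B.image (· % t) := by rw [himg]; exact Finset.mem_range.2 hr
    simpa using this
  have key : ∀ i, i < t → b + i ∈ B := by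
    intro i
    induction i with
    | zero => intro _; simpa using hb
    | succ i ih =>
      intro hit
      have hiB : b + i ∈ B := ih (by omega)
      obtain ⟨p, hp, hpr⟩ := hsurj ((b + i + 1) % t) (Nat.mod_lt _ ht)
      have hpb : b ≤ p := hmin p hp
      have hgt : b + i < p := by
        by_contra hle
        push_neg at hle
        have h1 : (p - b) + b ≡ (i + 1) + b [MOD t] := by
          rw [Nat.sub_add_cancel hpb]
          calc p ≡ b + i + 1 [MOD t] := hpr
            _ = (i + 1) + b := by ring
        have h2 := h1.add_right_cancel' b
        have h3 : (p - b) % t = (i + 1) % t := h2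
        rw [Nat.mod_eq_of_lt (by omega : p - b < t), Nat.mod_eq_of_lt hit] at h3
        omega
      have hmod : (p - (b + i)) % t = 1 % t := by
        apply sub_mod_one' t p (b + i) (le_of_lt hgt)
        rw [hpr]
      have := hforce (b + i) hiB p hp hgt hmod
      rw [this] at hp
      have heq : b + (i + 1) = b + i + 1 := by ring
      rwa [heq]
  symm
  apply Finset.eq_of_subset_of_card_le
  · intro x hx
    simp only [Finset.mem_image, Finset.mem_range] at hx
    obtain ⟨i, hi, rfl⟩ := hx
    exact key i hi
  · rw [hcard, Finset.card_image_of_injective _ (add_right_injective b), Finset.card_range]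

lemma linear_main (t n : ℕ) (ht : 1 ≤ t) (A : Finset ℕ)
    (hcard : A.card = 2 * t) (h0 : 0 ∈ A) (hub : ∀ a ∈ A, a + 2 ≤ n)
    (hm : ∀ p ∈ A, ∃ q, (q ∈ A ∧ EE t p q) ∧ ∀ q' ∈ A, EE t p q' → q' = q) :
    ∃ y, t + 1 ≤ y ∧ y + t + 1 ≤ n ∧
      A = Finset.range t ∪ (Finset.range t).image (y + ·) := by
  have h' : ∀ p, ∃ q, p ∈ A → ((q ∈ A ∧ EE t p q) ∧ ∀ q' ∈ A, EE t p q' → q' = q) := by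
    intro p
    by_cases hp : p ∈ A
    · obtain ⟨q, hq⟩ := hm p hp
      exact ⟨q, fun _ => hq⟩
    · exact ⟨0, fun h => absurd h hp⟩
  choose μ hμ using h'
  have hμA : ∀ p ∈ A, μ p ∈ A := fun p hp => ((hμ p hp).1).1
  have hμE : ∀ p ∈ A, EE t p (μ p) := fun p hp => ((hμ p hp).1).2
  have hμu : ∀ p ∈ A, ∀ q ∈ A, EE t p q → q = μ p := fun p hp q hq h => (hμ p hp).2 q hq h
  have hinv : ∀ p ∈ A, μ (μ p) = p :=
    fun p hp => (hμu (μ p) (hμA p hp) p hp (EE_symm (hμE p hp))).symm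
  have hne : ∀ p ∈ A, μ p ≠ p := fun p hp => (hμE p hp).1
  have hgap : ∀ p ∈ A, t + 1 ≤ Nat.dist p (μ p) := by
    intro p hp
    obtain ⟨h1, h2, h3⟩ := hμE p hp
    refine ge_t_add_one t _ ht h2 (fun h => h1 ?_) h3
    exact (Nat.eq_of_dist_eq_zero h).symm
  have hpair : ∀ p ∈ A, ∀ q ∈ A, p < q → (q - p) % t = 1 % t → q - p ≠ 1 → q = μ p := by
    intro p hp q hq hlt h1 h2
    apply hμu p hp q hq
    refine ⟨by omega, ?_, ?_⟩
    · rw [Nat.dist_eq_sub_of_le (le_of_lt hlt)]; exact h1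
    · rw [Nat.dist_eq_sub_of_le (le_of_lt hlt)]; exact h2
  classical
  set L := A.filter (fun p => p < μ p) with hL
  set R := A.filter (fun p => ¬ p < μ p) with hR
  have hLR : L ∪ R = A := Finset.filter_union_filter_not_eq _ A
  have hcards : L.card + R.card = 2 * t := by
    rw [← hcard]
    exact Finset.card_filter_add_card_filter_not _
  have hLA : ∀ p ∈ L, p ∈ A := by
    intro p hp; rw [hL, Finset.mem_filter] at hp; exact hp.1
  have hRA : ∀ p ∈ R, p ∈ A := by
    intro p hp; rw [hR, Finset.mem_filter] at hp; exact hp.1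
  have hLlt : ∀ p ∈ L, p < μ p := by
    intro p hp; rw [hL, Finset.mem_filter] at hp; exact hp.2
  have hRlt : ∀ p ∈ R, μ p < p := by
    intro p hp
    rw [hR, Finset.mem_filter] at hp
    have := hne p hp.1
    omega
  have hinjL : ∀ p ∈ L, ∀ q ∈ L, p % t = q % t → p = q := by
    have asym : ∀ p ∈ L, ∀ q ∈ L, p < q → p % t = q % t → False := by
      intro p hpL q hqL hlt hmod
      have hpA := hLA p hpL
      have hqA := hLA q hqL
      have hdA : μ q ∈ A := hμA q hqA
      have hqd : q < μ q := hLlt q hqL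
      have h1 : (μ q - q) % t = 1 % t := by
        have := (hμE q hqA).2.1
        rwa [Nat.dist_eq_sub_of_le (le_of_lt hqd)] at this
      have h2 : μ q % t = (q + 1) % t := add_back_mod t (μ q) q (le_of_lt hqd) h1
      have h3 : μ q % t = (p + 1) % t := h2.trans (Nat.ModEq.add_right 1 hmod.symm)
      have h4 : (μ q - p) % t = 1 % t := sub_mod_one t (μ q) p (by omega) h3
      have h5 : μ q = μ p := hpair p hpA (μ q) hdA (by omega) h4 (by omega)
      have h6 : μ (μ p) = p := hinv p hpA
      have h7 : μ (μ q) = q := hinv q hqA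
      rw [h5, h6] at h7
      omega
    intro p hpL q hqL hmod
    rcases lt_trichotomy p q with h | h | h
    · exact (asym p hpL q hqL h hmod).elim
    · exact h
    · exact (asym q hqL p hpL h hmod.symm).elim
  have hinjR : ∀ p ∈ R, ∀ q ∈ R, p % t = q % t → p = q := by
    have asym : ∀ p ∈ R, ∀ q ∈ R, p < q → p % t = q % t → False := by
      intro p hpR q hqR hlt hmod
      have hpA := hRA p hpR
      have hqA := hRA q hqR
      have heA : μ p ∈ A := hμA p hpA
      have hep : μ p < p := hRlt p hpR
      have h1 : (p - μ p) % t = 1 % t := by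
        have := (hμE p hpA).2.1
        rwa [Nat.dist_comm, Nat.dist_eq_sub_of_le (le_of_lt hep)] at this
      have h2 : p % t = (μ p + 1) % t := add_back_mod t p (μ p) (le_of_lt hep) h1
      have h3 : q % t = (μ p + 1) % t := hmod.symm.trans h2
      have h4 : (q - μ p) % t = 1 % t := sub_mod_one t q (μ p) (by omega) h3
      have h5 : q = μ (μ p) := hpair (μ p) heA q hqA (by omega) h4 (by omega)
      rw [hinv p hpA] at h5
      omega
    intro p hpL q hqL hmod
    rcases lt_trichotomy p q with h | h | h
    · exact (asym p hpL q hqL h hmod).elim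
    · exact h
    · exact (asym q hqL p hpL h hmod.symm).elim
  have cardL_le : L.card ≤ t := by
    have h1 : L.image (· % t) ⊆ Finset.range t := by
      intro r hr
      simp only [Finset.mem_image] at hr
      obtain ⟨p, _, rfl⟩ := hr
      exact Finset.mem_range.2 (Nat.mod_lt _ ht)
    calc L.card = (L.image (· % t)).card :=
          (Finset.card_image_of_injOn (fun p hp q hq h => hinjL p hp q hq h)).symm
      _ ≤ t := by simpa using Finset.card_le_card h1
  have cardR_le : R.card ≤ t := by
    have h1 : R.image (· % t) ⊆ Finset.range t := by
      intro r hr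
      simp only [Finset.mem_image] at hr
      obtain ⟨p, _, rfl⟩ := hr
      exact Finset.mem_range.2 (Nat.mod_lt _ ht)
    calc R.card = (R.image (· % t)).card :=
          (Finset.card_image_of_injOn (fun p hp q hq h => hinjR p hp q hq h)).symm
      _ ≤ t := by simpa using Finset.card_le_card h1
  have hLcard : L.card = t := by omega
  have hRcard : R.card = t := by omega
  have hforceL : ∀ p ∈ L, ∀ q ∈ L, p < q → (q - p) % t = 1 % t → q = p + 1 := by
    intro p hpL q hqL hlt h1
    by_contra hne1
    have h2 : q = μ p := hpair p (hLA p hpL) q (hLA q hqL) hlt h1 (by omega)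
    have h3 : μ q = p := by rw [h2]; exact hinv p (hLA p hpL)
    have := hLlt q hqL
    omega
  have hforceR : ∀ p ∈ R, ∀ q ∈ R, p < q → (q - p) % t = 1 % t → q = p + 1 := by
    intro p hpR q hqR hlt h1
    by_contra hne1
    have h2 : q = μ p := hpair p (hRA p hpR) q (hRA q hqR) hlt h1 (by omega)
    have h3 := hRlt p hpR
    rw [← h2] at h3
    omega
  have h0L : 0 ∈ L := by
    rw [hL, Finset.mem_filter]
    refine ⟨h0, ?_⟩
    have := hne 0 h0
    omega
  have hLeq : L = (Finset.range t).image (0 + ·) :=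
    block_lemma t L hLcard hinjL hforceL 0 h0L (fun b' _ => Nat.zero_le _)
  have hLeq' : L = Finset.range t := by
    rw [hLeq]
    ext x
    simp
  have hRne : R.Nonempty := Finset.card_pos.1 (by omega)
  obtain ⟨y, hyR, hymin⟩ : ∃ y ∈ R, ∀ b ∈ R, y ≤ b :=
    ⟨R.min' hRne, R.min'_mem hRne, fun b hb => R.min'_le b hb⟩
  have hReq : R = (Finset.range t).image (y + ·) :=
    block_lemma t R hRcard hinjR hforceR _ hyR hymin
  have hy1 : t + 1 ≤ y := by
    have h1 := hgap _ (hRA _ hyR)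
    have h2 := hRlt _ hyR
    rw [Nat.dist_comm, Nat.dist_eq_sub_of_le (le_of_lt h2)] at h1
    omega
  have hy2 : y + t + 1 ≤ n := by
    have hmem : y + (t - 1) ∈ R := by
      rw [hReq]
      exact Finset.mem_image.2 ⟨t - 1, Finset.mem_range.2 (by omega), rfl⟩
    have := hub _ (hRA _ hmem)
    omega
  exact ⟨y, hy1, hy2, by rw [← hLR, hLeq', hReq]⟩

/-- For `k ≥ 4`, every induced matching of size `t` in `GA(t,k)'` consists of the
edges `{x+i, y+i}` for `0 ≤ i ≤ t-1`, for some `x, y` with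
`y - x ∈ {t+1, …, n-t-1}` (where `n = t(k-1)+2`). -/
theorem stmt_12 (t k : ℕ) (ht : 1 ≤ t) (hk : 4 ≤ k)
    (S : Finset (ZMod (t * (k - 1) + 2))) (hcard : S.card = 2 * t)
    (hmatch : ∀ v ∈ S, ((GA' t k).neighborSet v ∩ ↑S).ncard = 1) :
    ∃ x y : ZMod (t * (k - 1) + 2),
      t + 1 ≤ (y - x).val ∧ (y - x).val ≤ t * (k - 1) + 1 - t ∧
      S = (Finset.range t).image (fun i : ℕ => x + (i : ZMod (t * (k - 1) + 2))) ∪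
          (Finset.range t).image (fun i : ℕ => y + (i : ZMod (t * (k - 1) + 2))) := by
  have hk1 : 3 ≤ k - 1 := by omega
  have hn3 : 3 * t + 2 ≤ t * (k - 1) + 2 := by
    have h := Nat.mul_le_mul_left t hk1
    omega
  haveI : NeZero (t * (k - 1) + 2) := ⟨by omega⟩
  -- symmetry of the defining relation
  have hmodn : (t * (k - 1) + 2) % t = 2 % t := by
    rw [Nat.add_mod, Nat.mul_mod_right]
    simp
  have hP : ∀ w : ZMod (t * (k - 1) + 2), w ≠ 0 →
      (w.val % t = 1 % t ∧ w.val ≠ 1 ∧ w.val ≠ t * (k - 1) + 1) →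
      ((-w).val % t = 1 % t ∧ (-w).val ≠ 1 ∧ (-w).val ≠ t * (k - 1) + 1) := by
    rintro w hw ⟨h1, h2, h3⟩
    have hvlt : w.val < (t * (k - 1) + 2) := ZMod.val_lt w
    have hvpos : w.val ≠ 0 := fun h => hw ((ZMod.val_eq_zero w).1 h)
    have hneg : (-w).val = (t * (k - 1) + 2) - w.val := by rw [ZMod.neg_val, if_neg hw]
    rw [hneg]
    refine ⟨?_, by omega, by omega⟩
    apply sub_mod_one t (t * (k - 1) + 2) w.val (le_of_lt hvlt)
    calc (t * (k - 1) + 2) % t = 2 % t := hmodn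
      _ = (1 + 1) % t := by norm_num
      _ = (w.val + 1) % t := (Nat.ModEq.add_right 1 h1).symm
  have hadj : ∀ u v : ZMod (t * (k - 1) + 2), (GA' t k).Adj u v ↔
      u ≠ v ∧ ((v - u).val % t = 1 % t ∧ (v - u).val ≠ 1 ∧ (v - u).val ≠ t * (k - 1) + 1) := by
    intro u v
    constructor
    · intro h
      rw [GA', SimpleGraph.fromRel_adj] at h
      obtain ⟨hne, h | h⟩ := h
      · exact ⟨hne, h⟩
      · refine ⟨hne, ?_⟩
        have h5 := hP (u - v) (sub_ne_zero.2 hne) h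
        rwa [neg_sub] at h5
    · rintro ⟨hne, h⟩
      rw [GA', SimpleGraph.fromRel_adj]
      exact ⟨hne, Or.inl h⟩
  -- find a run start c
  have hSne : S.Nonempty := Finset.card_pos.1 (by omega)
  have hex : ∃ c ∈ S, c - 1 ∉ S := by
    by_contra hco
    push_neg at hco
    obtain ⟨c₀, hc₀⟩ := hSne
    have hall : ∀ m : ℕ, c₀ - (m : ZMod (t * (k - 1) + 2)) ∈ S := by
      intro m
      induction m with
      | zero => simpa using hc₀
      | succ m ih =>
        have h1 := hco _ ih
        have h2 : c₀ - ((m + 1 : ℕ) : ZMod (t * (k - 1) + 2)) = c₀ - (m : ℕ) - 1 := by push_cast; ring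
        rwa [h2]
    have huniv : ∀ z : ZMod (t * (k - 1) + 2), z ∈ S := by
      intro z
      have h1 := hall (c₀ - z).val
      rwa [ZMod.natCast_zmod_val, sub_sub_cancel] at h1
    have h2 : (Finset.univ : Finset (ZMod (t * (k - 1) + 2))).card ≤ S.card :=
      Finset.card_le_card (fun z _ => huniv z)
    rw [Finset.card_univ, ZMod.card] at h2
    omega
  obtain ⟨c, hcS, hc1⟩ := hex
  set A := S.image (fun v => (v - c).val) with hA
  have hval_inj : ∀ u ∈ S, ∀ v ∈ S, (u - c).val = (v - c).val → u = v := by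
    intro u _ v _ h
    have h3 : u - c = v - c := by
      have h1 := ZMod.natCast_zmod_val (u - c)
      have h2 := ZMod.natCast_zmod_val (v - c)
      rw [← h1, ← h2, h]
    have h4 := congrArg (· + c) h3
    simpa using h4
  have hAcard : A.card = 2 * t := by
    rw [hA, Finset.card_image_of_injOn (fun u hu v hv h => hval_inj u hu v hv h), hcard]
  have h0A : (0 : ℕ) ∈ A := by
    rw [hA]
    exact Finset.mem_image.2 ⟨c, hcS, by simp⟩
  have hubA : ∀ a ∈ A, a + 2 ≤ (t * (k - 1) + 2) := by
    intro a ha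
    rw [hA] at ha
    obtain ⟨v, hvS, rfl⟩ := Finset.mem_image.1 ha
    have h1 : (v - c).val < (t * (k - 1) + 2) := ZMod.val_lt _
    have h2 : (v - c).val ≠ (t * (k - 1) + 2) - 1 := by
      intro h
      apply hc1
      have h3 : v - c = (((t * (k - 1) + 2) - 1 : ℕ) : ZMod (t * (k - 1) + 2)) := by rw [← h, ZMod.natCast_zmod_val]
      have h4 : (((t * (k - 1) + 2) - 1 : ℕ) : ZMod (t * (k - 1) + 2)) = -1 := by
        rw [Nat.cast_sub (by omega : 1 ≤ (t * (k - 1) + 2)), ZMod.natCast_self]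
        simp
      have h5 : v = c - 1 := by
        have h6 : v - c = -1 := by rw [h3, h4]
        calc v = c + (v - c) := by ring
          _ = c - 1 := by rw [h6]; ring
      rwa [← h5]
    omega
  have trans1 : ∀ u ∈ S, ∀ v ∈ S, (u - c).val < (v - c).val →
      ((GA' t k).Adj u v ↔ (((v - c).val - (u - c).val) % t = 1 % t ∧
        (v - c).val - (u - c).val ≠ 1)) := by
    intro u huS v hvS hlt
    have hq : (v - c).val < (t * (k - 1) + 2) := ZMod.val_lt _
    have hvu : v - u = ((((v - c).val - (u - c).val) : ℕ) : ZMod (t * (k - 1) + 2)) := by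
      rw [Nat.cast_sub (le_of_lt hlt), ZMod.natCast_zmod_val, ZMod.natCast_zmod_val]
      ring
    have hval : (v - u).val = (v - c).val - (u - c).val := by
      rw [hvu, ZMod.val_cast_of_lt (by omega)]
    have hne' : u ≠ v := by
      intro e
      rw [e] at hlt
      omega
    have hub1 : (v - c).val + 2 ≤ (t * (k - 1) + 2) := by
      apply hubA
      rw [hA]
      exact Finset.mem_image_of_mem _ hvS
    rw [hadj u v, hval]
    constructor
    · rintro ⟨-, h1, h2, -⟩
      exact ⟨h1, h2⟩
    · rintro ⟨h1, h2⟩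
      exact ⟨hne', h1, h2, by omega⟩
  have keyEE : ∀ u ∈ S, ∀ v ∈ S,
      ((GA' t k).Adj u v ↔ EE t (u - c).val (v - c).val) := by
    intro u huS v hvS
    rcases lt_trichotomy (u - c).val (v - c).val with h | h | h
    · rw [trans1 u huS v hvS h]
      unfold EE
      rw [Nat.dist_eq_sub_of_le (le_of_lt h)]
      constructor
      · rintro ⟨h1, h2⟩
        exact ⟨by omega, h1, h2⟩
      · rintro ⟨-, h1, h2⟩
        exact ⟨h1, h2⟩
    · have huv : u = v := hval_inj u huS v hvS h
      constructor
      · intro had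
        rw [huv] at had
        exact (SimpleGraph.irrefl _ had).elim
      · rintro ⟨hne1, -⟩
        exact (hne1 h.symm).elim
    · rw [SimpleGraph.adj_comm, trans1 v hvS u huS h]
      unfold EE
      rw [Nat.dist_comm, Nat.dist_eq_sub_of_le (le_of_lt h)]
      constructor
      · rintro ⟨h1, h2⟩
        exact ⟨by omega, h1, h2⟩
      · rintro ⟨-, h1, h2⟩
        exact ⟨h1, h2⟩
  have hmA : ∀ p ∈ A, ∃ q, (q ∈ A ∧ EE t p q) ∧ ∀ q' ∈ A, EE t p q' → q' = q := by
    intro p hp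
    rw [hA] at hp
    obtain ⟨v, hvS, rfl⟩ := Finset.mem_image.1 hp
    obtain ⟨w, hw⟩ := Set.ncard_eq_one.1 (hmatch v hvS)
    have hwmem : w ∈ (GA' t k).neighborSet v ∩ ↑S := by
      rw [hw]
      exact rfl
    obtain ⟨hwadj, hwS⟩ := hwmem
    have hwS' : w ∈ S := hwS
    refine ⟨(w - c).val, ⟨?_, (keyEE v hvS w hwS').1 hwadj⟩, ?_⟩
    · rw [hA]
      exact Finset.mem_image_of_mem _ hwS'
    · intro q' hq' hEEq
      rw [hA] at hq'
      obtain ⟨u, huS, rfl⟩ := Finset.mem_image.1 hq'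
      have hadjvu : (GA' t k).Adj v u := (keyEE v hvS u huS).2 hEEq
      have hmem2 : u ∈ (GA' t k).neighborSet v ∩ ↑S := ⟨hadjvu, huS⟩
      rw [hw, Set.mem_singleton_iff] at hmem2
      rw [hmem2]
  obtain ⟨y, hy1, hy2, hAeq⟩ := linear_main t (t * (k - 1) + 2) ht A hAcard h0A hubA hmA
  have hyval : (c + (y : ZMod (t * (k - 1) + 2)) - c).val = y := by
    rw [add_sub_cancel_left, ZMod.val_cast_of_lt (by omega : y < (t * (k - 1) + 2))]
  refine ⟨c, c + (y : ZMod (t * (k - 1) + 2)), ?_, ?_, ?_⟩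
  · rw [hyval]
    exact hy1
  · rw [hyval]
    omega
  · have hS : S = A.image (fun p : ℕ => c + (p : ZMod (t * (k - 1) + 2))) := by
      rw [hA, Finset.image_image]
      symm
      calc S.image ((fun p : ℕ => c + (p : ZMod (t * (k - 1) + 2))) ∘ (fun v => (v - c).val))
          = S.image id := Finset.image_congr (fun v hv => by
            show c + (((v - c).val : ℕ) : ZMod (t * (k - 1) + 2)) = id v
            rw [ZMod.natCast_zmod_val]
            show c + (v - c) = v
            ring)
        _ = S := Finset.image_id
    rw [hS, hAeq, Finset.image_union, Finset.image_image]
    congr 1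
    apply Finset.image_congr
    intro i hi
    show c + ((y + i : ℕ) : ZMod (t * (k - 1) + 2)) = (c + (y : ZMod (t * (k - 1) + 2))) + (i : ZMod (t * (k - 1) + 2))
    push_cast
    ring
end
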